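/- arXiv:1304.3780 — 7 statements merged into one kernel-verified Lean document; each statement's English description precedes it below -/
import Mathlib

section
/- Let n ≥ 1 and let p : (Fin n → Fin 3) → ℝ satisfy p(C) = 1, p(A) = p(B) = 0, and p(s) = (1/deg s)·Σ_{t adjacent to s} p(t) for every non-corner state s of the Hanoi graph H_n. Then p(s½) = 2·(5^(n−1) − 3^(n−1))/(5^n − 3^n). (This is q₃(n), the probability that the random walk started with the largest disk on the second peg and the rest on the first peg ends with all disks on the third peg; in particular q₃(n) = 2·q₁(n).) -/
/-- The Hanoi graph `H_n`: vertices are states `s : Fin n → Fin 3` (`s k` is the peg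
holding the disk of size `k+1`); two distinct states are adjacent iff a single disk moves
and it is topmost on both its source and destination pegs. -/
def hanoi (n : ℕ) : SimpleGraph (Fin n → Fin 3) where
  Adj s t := ∃ k : Fin n, (∀ j, j ≠ k → s j = t j) ∧ s k ≠ t k ∧
    ∀ j, j < k → s j ≠ s k ∧ s j ≠ t k
  symm := by
    constructor
    rintro s t ⟨k, h1, h2, h3⟩
    refine ⟨k, fun j hj => (h1 j hj).symm, h2.symm, fun j hj => ?_⟩
    rw [← h1 j hj.ne]
    exact ⟨(h3 j hj).2, (h3 j hj).1⟩
  loopless := by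
    constructor
    rintro s ⟨k, _, h2, _⟩
    exact h2 rfl

instance hanoiAdjDecidable (n : ℕ) : DecidableRel (hanoi n).Adj := fun s t =>
  inferInstanceAs (Decidable (∃ k : Fin n, (∀ j, j ≠ k → s j = t j) ∧ s k ≠ t k ∧
    ∀ j, j < k → s j ≠ s k ∧ s j ≠ t k))

/-- The corner state with all disks on peg `p`. -/
def corner (n : ℕ) (p : Fin 3) : Fin n → Fin 3 := fun _ => p

/-- The state `s½`: the largest disk on the second peg, all other disks on the first peg. -/
def halfState (n : ℕ) : Fin n → Fin 3 := fun k => if (k : ℕ) < n - 1 then 0 else 1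


/-- the third peg -/
def oth (m q : Fin 3) : Fin 3 := -(m + q)

lemma fin3_cases : ∀ a q : Fin 3, a ≠ q → a = q + 1 ∨ a = q + 2 := by decide
lemma fin3_add_one_ne : ∀ q : Fin 3, q + 1 ≠ q := by decide
lemma fin3_add_two_ne : ∀ q : Fin 3, q + 2 ≠ q := by decide
lemma fin3_succ_ne : ∀ q : Fin 3, q + 1 ≠ q + 2 := by decide
lemma fin3_all : ∀ m : Fin 3, m = 0 ∨ m = 1 ∨ m = 2 := by decide

lemma oth_ne_left {m q : Fin 3} (h : m ≠ q) : oth m q ≠ m := by revert h; revert m q; decide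
lemma oth_ne_right {m q : Fin 3} (h : m ≠ q) : oth m q ≠ q := by revert h; revert m q; decide
lemma oth_comm (m q : Fin 3) : oth m q = oth q m := by revert m q; decide
lemma eq_oth {m q x : Fin 3} (h : m ≠ q) (h1 : x ≠ m) (h2 : x ≠ q) : x = oth m q := by
  revert h h1 h2; revert m q x; decide
lemma oth_self (m : Fin 3) : oth m m = m := by revert m; decide

lemma adj_corner_iff {n : ℕ} (q : Fin 3) (t : Fin (n+1) → Fin 3) :
    (hanoi (n+1)).Adj (corner (n+1) q) t ↔ (t 0 ≠ q ∧ ∀ j, j ≠ 0 → t j = q) := by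
  constructor
  · rintro ⟨k, h1, h2, h3⟩
    have hk : k = 0 := by
      by_contra hk
      have h0 : (0 : Fin (n+1)) < k := Fin.pos_of_ne_zero hk
      exact (h3 0 h0).1 rfl
    subst hk
    exact ⟨fun h => h2 h.symm, fun j hj => (h1 j hj).symm⟩
  · rintro ⟨h0, hj⟩
    exact ⟨0, fun j hjj => (hj j hjj).symm, fun h => h0 h.symm,
      fun j hjj => absurd hjj (Fin.not_lt_zero j)⟩

lemma nb_corner {n : ℕ} (q : Fin 3) :
    (hanoi (n+1)).neighborFinset (corner (n+1) q) =
      {Function.update (corner (n+1) q) 0 (q+1), Function.update (corner (n+1) q) 0 (q+2)} := by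
  ext t
  rw [SimpleGraph.mem_neighborFinset, adj_corner_iff]
  constructor
  · rintro ⟨h0, hj⟩
    have ht0 : t 0 = q + 1 ∨ t 0 = q + 2 := fin3_cases _ _ h0
    have key : ∀ r : Fin 3, t 0 = r → t = Function.update (corner (n+1) q) 0 r := by
      intro r hr
      funext j
      by_cases hj0 : j = 0
      · subst hj0; rw [Function.update_self]; exact hr
      · rw [Function.update_of_ne hj0]; exact hj j hj0
    rcases ht0 with h | h
    · exact Finset.mem_insert.mpr (Or.inl (key _ h))
    · exact Finset.mem_insert.mpr (Or.inr (Finset.mem_singleton.mpr (key _ h)))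
  · intro h
    have key : ∀ r : Fin 3, r ≠ q → (Function.update (corner (n+1) q) 0 r 0 ≠ q ∧
        ∀ j, j ≠ 0 → Function.update (corner (n+1) q) 0 r j = q) := by
      intro r hr
      refine ⟨by rw [Function.update_self]; exact hr, fun j hj => by
        rw [Function.update_of_ne hj]; rfl⟩
    rcases Finset.mem_insert.mp h with h | h
    · subst h; exact key _ (fin3_add_one_ne q)
    · rw [Finset.mem_singleton] at h; subst h; exact key _ (fin3_add_two_ne q)

lemma adj_snoc_iff {n : ℕ} (s t : Fin n → Fin 3) (m : Fin 3) :
    (hanoi (n+1)).Adj (Fin.snoc s m) (Fin.snoc t m) ↔ (hanoi n).Adj s t := by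
  constructor
  · rintro ⟨k, h1, h2, h3⟩
    have hk : k ≠ Fin.last n := by
      intro h; subst h; simp [Fin.snoc_last] at h2
    obtain ⟨k', hk'⟩ := Fin.exists_castSucc_eq.mpr hk
    subst hk'
    refine ⟨k', fun j hj => ?_, ?_, fun j hj => ?_⟩
    · have := h1 j.castSucc (by simpa using hj)
      simpa [Fin.snoc_castSucc] using this
    · simpa [Fin.snoc_castSucc] using h2
    · have := h3 j.castSucc (Fin.castSucc_lt_castSucc_iff.mpr hj)
      simpa [Fin.snoc_castSucc] using this
  · rintro ⟨k, h1, h2, h3⟩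
    refine ⟨k.castSucc, fun j hj => ?_, by simpa [Fin.snoc_castSucc] using h2, fun j hj => ?_⟩
    · induction j using Fin.lastCases with
      | last => simp [Fin.snoc_last]
      | cast i =>
        have : i ≠ k := fun h => hj (by rw [h])
        simpa [Fin.snoc_castSucc] using h1 i this
    · induction j using Fin.lastCases with
      | last => exact absurd hj (by simp [Fin.lt_iff_val_lt_val, Fin.last])
      | cast i =>
        have : i < k := Fin.castSucc_lt_castSucc_iff.mp hj
        simpa [Fin.snoc_castSucc] using h3 i this

/-- any Fin 3 valued function avoiding two distinct values is constant -/
lemma fin3_const {m x : Fin 3} (h : m ≠ x) :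
    ∀ a b : Fin 3, a ≠ m → a ≠ x → b ≠ m → b ≠ x → a = b := by revert m x; decide

/-- If `s` is not constant, any neighbor of `snoc s m` keeps the big disk at `m`. -/
lemma adj_snoc_last_eq {n : ℕ} (s : Fin (n+1) → Fin 3) (m : Fin 3)
    (hnc : ∀ q, s ≠ fun _ => q) (u : Fin (n+2) → Fin 3)
    (h : (hanoi (n+2)).Adj (Fin.snoc s m) u) : u (Fin.last (n+1)) = m := by
  obtain ⟨k, h1, h2, h3⟩ := h
  by_cases hk : k = Fin.last (n+1)
  · subst hk
    exfalso
    apply hnc (s 0)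
    funext j
    have hj := h3 j.castSucc (Fin.castSucc_lt_last j)
    have h0 := h3 (Fin.castSucc 0) (Fin.castSucc_lt_last 0)
    rw [Fin.snoc_castSucc, Fin.snoc_last] at hj h0
    rw [Fin.snoc_last] at h2
    exact fin3_const h2 (s j) (s 0) hj.1 hj.2 h0.1 h0.2
  · have := h1 (Fin.last (n+1)) (fun hh => hk hh.symm)
    rw [Fin.snoc_last] at this
    exact this.symm

lemma nb_snoc {n : ℕ} (s : Fin (n+1) → Fin 3) (m : Fin 3) (hnc : ∀ q, s ≠ fun _ => q) :
    (hanoi (n+2)).neighborFinset (Fin.snoc s m) =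
      ((hanoi (n+1)).neighborFinset s).image (fun t => Fin.snoc t m) := by
  ext u
  rw [SimpleGraph.mem_neighborFinset, Finset.mem_image]
  constructor
  · intro h
    have hl := adj_snoc_last_eq s m hnc u h
    refine ⟨Fin.init u, ?_, ?_⟩
    · rw [SimpleGraph.mem_neighborFinset, ← adj_snoc_iff (m := m)]
      have hu : Fin.snoc (Fin.init u) m = u := by rw [← hl]; exact Fin.snoc_init_self u
      rw [hu]; exact h
    · rw [← hl, Fin.snoc_init_self]
  · rintro ⟨t, ht, rfl⟩
    rw [SimpleGraph.mem_neighborFinset] at ht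
    exact (adj_snoc_iff s t m).mpr ht

lemma snoc_injective {n : ℕ} (m : Fin 3) :
    Function.Injective (fun t : Fin n → Fin 3 => Fin.snoc t m : (Fin n → Fin 3) → (Fin (n+1) → Fin 3)) := by
  intro a b h
  have := congrArg Fin.init h
  simpa [Fin.init_snoc] using this

/-- The cross edge from an interface state. -/
lemma adj_iface_cross {n : ℕ} (m q : Fin 3) (hmq : m ≠ q) (u : Fin (n+2) → Fin 3)
    (h : (hanoi (n+2)).Adj (Fin.snoc (fun _ : Fin (n+1) => q) m) u)
    (hl : u (Fin.last (n+1)) ≠ m) :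
    u = Fin.snoc (fun _ : Fin (n+1) => q) (oth m q) := by
  obtain ⟨k, h1, h2, h3⟩ := h
  by_cases hk : k = Fin.last (n+1)
  · subst hk
    have h0 := h3 (Fin.castSucc 0) (Fin.castSucc_lt_last 0)
    rw [Fin.snoc_castSucc, Fin.snoc_last] at h0
    rw [Fin.snoc_last] at h2
    have hu : u (Fin.last (n+1)) = oth m q := eq_oth hmq hl (fun hh => h0.2 hh.symm)
    funext j
    induction j using Fin.lastCases with
    | last => rw [Fin.snoc_last, hu]
    | cast i =>
      have := h1 i.castSucc (by simp [Fin.ne_iff_vne, Fin.last]; omega)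
      rw [Fin.snoc_castSucc] at this ⊢
      exact this.symm
  · exfalso
    have := h1 (Fin.last (n+1)) (fun hh => hk hh.symm)
    rw [Fin.snoc_last] at this
    exact hl this.symm

lemma adj_iface_cross' {n : ℕ} (m q : Fin 3) (hmq : m ≠ q) :
    (hanoi (n+2)).Adj (Fin.snoc (fun _ : Fin (n+1) => q) m)
      (Fin.snoc (fun _ : Fin (n+1) => q) (oth m q)) := by
  refine ⟨Fin.last (n+1), fun j hj => ?_, ?_, fun j hj => ?_⟩
  · obtain ⟨i, rfl⟩ := Fin.exists_castSucc_eq.mpr hj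
    rw [Fin.snoc_castSucc, Fin.snoc_castSucc]
  · rw [Fin.snoc_last, Fin.snoc_last]
    exact fun hh => (oth_ne_left hmq) hh.symm
  · obtain ⟨i, rfl⟩ := Fin.exists_castSucc_eq.mpr (Fin.ne_of_lt hj)
    rw [Fin.snoc_castSucc, Fin.snoc_last, Fin.snoc_last]
    exact ⟨fun hh => hmq hh.symm, fun hh => (oth_ne_right hmq) hh.symm⟩

/-- The corner has no cross edges (at level ≥ 2). -/
lemma adj_corner_last_eq {n : ℕ} (q : Fin 3) (u : Fin (n+2) → Fin 3)
    (h : (hanoi (n+2)).Adj (Fin.snoc (fun _ : Fin (n+1) => q) q) u) : u (Fin.last (n+1)) = q := by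
  obtain ⟨k, h1, h2, h3⟩ := h
  by_cases hk : k = Fin.last (n+1)
  · subst hk
    have h0 := h3 (Fin.castSucc 0) (Fin.castSucc_lt_last 0)
    rw [Fin.snoc_castSucc, Fin.snoc_last] at h0
    exact absurd rfl h0.1
  · have := h1 (Fin.last (n+1)) (fun hh => hk hh.symm)
    rw [Fin.snoc_last] at this
    exact this.symm

/-! ### neighbor finset of interface states, degrees, restriction -/

lemma iface_noncorner {n : ℕ} (m q : Fin 3) (hmq : m ≠ q) (r : Fin 3) :
    (Fin.snoc (fun _ : Fin (n+1) => q) m : Fin (n+2) → Fin 3) ≠ corner (n+2) r := by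
  intro h
  have h1 := congrFun h (Fin.last (n+1))
  have h2 := congrFun h (Fin.castSucc 0)
  rw [Fin.snoc_last] at h1
  rw [Fin.snoc_castSucc] at h2
  exact hmq (h1.trans h2.symm)

lemma snoc_noncorner {n : ℕ} (s : Fin (n+1) → Fin 3) (m : Fin 3)
    (hnc : ∀ r, s ≠ corner (n+1) r) (r : Fin 3) :
    (Fin.snoc s m : Fin (n+2) → Fin 3) ≠ corner (n+2) r := by
  intro h
  apply hnc r
  funext j
  have := congrFun h (Fin.castSucc j)
  rwa [Fin.snoc_castSucc] at this

lemma nb_iface {n : ℕ} (m q : Fin 3) (hmq : m ≠ q) :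
    (hanoi (n+2)).neighborFinset (Fin.snoc (fun _ : Fin (n+1) => q) m) =
      insert (Fin.snoc (fun _ : Fin (n+1) => q) (oth m q))
        (((hanoi (n+1)).neighborFinset (fun _ : Fin (n+1) => q)).image (fun t => Fin.snoc t m)) := by
  ext u
  rw [SimpleGraph.mem_neighborFinset, Finset.mem_insert, Finset.mem_image]
  constructor
  · intro h
    by_cases hl : u (Fin.last (n+1)) = m
    · refine Or.inr ⟨Fin.init u, ?_, ?_⟩
      · rw [SimpleGraph.mem_neighborFinset, ← adj_snoc_iff (m := m)]
        have hu : Fin.snoc (Fin.init u) m = u := by rw [← hl]; exact Fin.snoc_init_self u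
        rw [hu]; exact h
      · rw [← hl]; exact Fin.snoc_init_self u
    · exact Or.inl (adj_iface_cross m q hmq u h hl)
  · rintro (rfl | ⟨t, ht, rfl⟩)
    · exact adj_iface_cross' m q hmq
    · rw [SimpleGraph.mem_neighborFinset] at ht
      exact (adj_snoc_iff _ t m).mpr ht

lemma nb_corner_snoc {n : ℕ} (q : Fin 3) :
    (hanoi (n+2)).neighborFinset (corner (n+2) q) =
      ((hanoi (n+1)).neighborFinset (fun _ : Fin (n+1) => q)).image (fun t => Fin.snoc t q) := by
  have hc : (corner (n+2) q : Fin (n+2) → Fin 3) = Fin.snoc (fun _ : Fin (n+1) => q) q := by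
    funext j
    induction j using Fin.lastCases with
    | last => rw [Fin.snoc_last]; rfl
    | cast i => rw [Fin.snoc_castSucc]; rfl
  rw [hc]
  ext u
  rw [SimpleGraph.mem_neighborFinset, Finset.mem_image]
  constructor
  · intro h
    have hl := adj_corner_last_eq q u h
    refine ⟨Fin.init u, ?_, ?_⟩
    · rw [SimpleGraph.mem_neighborFinset, ← adj_snoc_iff (m := q)]
      have hu : Fin.snoc (Fin.init u) q = u := by rw [← hl]; exact Fin.snoc_init_self u
      rw [hu]; exact h
    · rw [← hl]; exact Fin.snoc_init_self u
  · rintro ⟨t, ht, rfl⟩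
    rw [SimpleGraph.mem_neighborFinset] at ht
    exact (adj_snoc_iff _ t q).mpr ht

lemma card_nb_corner {n : ℕ} (q : Fin 3) :
    ((hanoi (n+1)).neighborFinset (corner (n+1) q)).card = 2 := by
  rw [nb_corner]
  rw [Finset.card_insert_of_notMem, Finset.card_singleton]
  rw [Finset.mem_singleton]
  intro h
  have := congrFun h 0
  rw [Function.update_self, Function.update_self] at this
  exact fin3_succ_ne q this

lemma deg_iface {n : ℕ} (m q : Fin 3) (hmq : m ≠ q) :
    (hanoi (n+2)).degree (Fin.snoc (fun _ : Fin (n+1) => q) m) = 3 := by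
  rw [← SimpleGraph.card_neighborFinset_eq_degree, nb_iface m q hmq]
  rw [Finset.card_insert_of_notMem, Finset.card_image_of_injective _ (snoc_injective m)]
  · have : (fun _ : Fin (n+1) => q) = corner (n+1) q := rfl
    rw [this, card_nb_corner]
  · rw [Finset.mem_image]
    rintro ⟨t, _, ht⟩
    have := congrFun ht (Fin.last (n+1))
    rw [Fin.snoc_last, Fin.snoc_last] at this
    exact oth_ne_left hmq this.symm

/-- restriction of a harmonic function to a sub-copy is harmonic -/
lemma hrec_snoc {n : ℕ} (p : (Fin (n+2) → Fin 3) → ℝ)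
    (hp : ∀ s, (∀ r : Fin 3, s ≠ corner (n+2) r) →
      p s = (1 / ((hanoi (n+2)).degree s : ℝ)) * ∑ t ∈ (hanoi (n+2)).neighborFinset s, p t)
    (m : Fin 3) :
    ∀ s, (∀ r : Fin 3, s ≠ corner (n+1) r) →
      (fun s => p (Fin.snoc s m)) s = (1 / ((hanoi (n+1)).degree s : ℝ)) *
        ∑ t ∈ (hanoi (n+1)).neighborFinset s, (fun s => p (Fin.snoc s m)) t := by
  intro s hs
  have hnc' : ∀ r, s ≠ fun _ => r := hs
  have h1 := hp (Fin.snoc s m) (snoc_noncorner s m hs)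
  rw [nb_snoc s m hnc'] at h1
  rw [Finset.sum_image (fun a _ b _ h => snoc_injective m h)] at h1
  have hdeg : (hanoi (n+2)).degree (Fin.snoc s m) = (hanoi (n+1)).degree s := by
    rw [← SimpleGraph.card_neighborFinset_eq_degree, ← SimpleGraph.card_neighborFinset_eq_degree,
      nb_snoc s m hnc', Finset.card_image_of_injective _ (snoc_injective m)]
  rw [hdeg] at h1
  exact h1

/-! ### The sequences and the harmonic computation -/

noncomputable def bet (k : ℕ) : ℝ := 2 * 3^k / (5^(k+1) - 3^(k+1))
noncomputable def Rr (k : ℕ) : ℝ := 2 / (5 + 3 * bet k)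

lemma pow53 (m : ℕ) : (3:ℝ)^(m+1) < 5^(m+1) := by
  apply pow_lt_pow_left₀ (by norm_num) (by norm_num)
  omega

lemma bet_pos (k : ℕ) : 0 < bet k := by
  apply div_pos (by positivity)
  have := pow53 k
  linarith

lemma base_pos (k : ℕ) : 0 < 5 + 3 * bet k := by
  have := bet_pos k
  linarith

lemma hRmul (k : ℕ) : Rr k * (5 + 3 * bet k) = 2 := by
  have h := (base_pos k).ne'
  rw [Rr]
  field_simp

/-- values at interface states -/
def Xf (k : ℕ) (p : (Fin (k+2) → Fin 3) → ℝ) (m q : Fin 3) : ℝ :=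
  p (Fin.snoc (fun _ : Fin (k+1) => q) m)

/-- candidate values -/
noncomputable def cf (k : ℕ) (p : (Fin (k+2) → Fin 3) → ℝ) (m q : Fin 3) : ℝ :=
  (1 - 3 * Rr k / 2) * p (corner (k+2) m) + (Rr k / 2) * p (corner (k+2) q)
    + Rr k * p (corner (k+2) (oth m q))

lemma snoc_const {k : ℕ} (m : Fin 3) :
    (Fin.snoc (fun _ : Fin (k+1) => m) m : Fin (k+2) → Fin 3) = corner (k+2) m := by
  funext j
  induction j using Fin.lastCases with
  | last => rw [Fin.snoc_last]; rfl
  | cast i => rw [Fin.snoc_castSucc]; rfl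

lemma Xf_diag (k : ℕ) (p : (Fin (k+2) → Fin 3) → ℝ) (m : Fin 3) :
    Xf k p m m = p (corner (k+2) m) := by
  rw [Xf, snoc_const]

lemma cf_diag (k : ℕ) (p : (Fin (k+2) → Fin 3) → ℝ) (m : Fin 3) :
    cf k p m m = p (corner (k+2) m) := by
  rw [cf, oth_self]
  ring

/-- the statement of the corner neighbor-sum lemma at level k+1 -/
def OS (k : ℕ) : Prop := ∀ p : (Fin (k+1) → Fin 3) → ℝ,
  (∀ s, (∀ r : Fin 3, s ≠ corner (k+1) r) →
    p s = (1 / ((hanoi (k+1)).degree s : ℝ)) * ∑ t ∈ (hanoi (k+1)).neighborFinset s, p t) →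
  ∀ q : Fin 3, ∑ t ∈ (hanoi (k+1)).neighborFinset (corner (k+1) q), p t =
    2 * p (corner (k+1) q) +
      bet k * ((∑ r : Fin 3, p (corner (k+1) r)) - 3 * p (corner (k+1) q))

lemma cross_not_mem {k : ℕ} (m q : Fin 3) (hmq : m ≠ q) :
    (Fin.snoc (fun _ : Fin (k+1) => q) (oth m q) : Fin (k+2) → Fin 3) ∉
      ((hanoi (k+1)).neighborFinset (fun _ : Fin (k+1) => q)).image (fun t => Fin.snoc t m) := by
  rw [Finset.mem_image]
  rintro ⟨t, _, ht⟩
  have := congrFun ht (Fin.last (k+1))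
  rw [Fin.snoc_last, Fin.snoc_last] at this
  exact oth_ne_left hmq this.symm

lemma key_eq (k : ℕ) (p : (Fin (k+2) → Fin 3) → ℝ)
    (hp : ∀ s, (∀ r : Fin 3, s ≠ corner (k+2) r) →
      p s = (1 / ((hanoi (k+2)).degree s : ℝ)) * ∑ t ∈ (hanoi (k+2)).neighborFinset s, p t)
    (IH : OS k) (m q : Fin 3) (hmq : m ≠ q) :
    3 * Xf k p m q = Xf k p (oth m q) q +
      (2 * Xf k p m q + bet k * ((Xf k p m 0 + Xf k p m 1 + Xf k p m 2) - 3 * Xf k p m q)) := by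
  have h1 := hp (Fin.snoc (fun _ : Fin (k+1) => q) m) (iface_noncorner m q hmq)
  rw [deg_iface m q hmq, nb_iface m q hmq,
    Finset.sum_insert (cross_not_mem m q hmq),
    Finset.sum_image (fun a _ b _ h => snoc_injective m h)] at h1
  have h2 := IH (fun s => p (Fin.snoc s m)) (hrec_snoc p hp m) q
  rw [Fin.sum_univ_three] at h2
  have e3 : (∑ t ∈ (hanoi (k+1)).neighborFinset (fun _ : Fin (k+1) => q), p (Fin.snoc t m))
      = 2 * Xf k p m q + bet k * ((Xf k p m 0 + Xf k p m 1 + Xf k p m 2) - 3 * Xf k p m q) := h2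
  have e2 : Xf k p m q = (1/((3:ℕ):ℝ)) * (Xf k p (oth m q) q +
      ∑ t ∈ (hanoi (k+1)).neighborFinset (fun _ : Fin (k+1) => q), p (Fin.snoc t m)) := h1
  rw [e3] at e2
  push_cast at e2
  linarith [e2]

lemma oth01 : oth 0 1 = 2 := by decide
lemma oth02 : oth 0 2 = 1 := by decide
lemma oth10 : oth 1 0 = 2 := by decide
lemma oth12 : oth 1 2 = 0 := by decide
lemma oth20 : oth 2 0 = 1 := by decide
lemma oth21 : oth 2 1 = 0 := by decide
lemma oth00 : oth 0 0 = 0 := by decide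
lemma oth11 : oth 1 1 = 1 := by decide
lemma oth22 : oth 2 2 = 2 := by decide

lemma cand_eq (k : ℕ) (p : (Fin (k+2) → Fin 3) → ℝ) (m q : Fin 3) (hmq : m ≠ q) :
    3 * cf k p m q = cf k p (oth m q) q +
      (2 * cf k p m q + bet k * ((cf k p m 0 + cf k p m 1 + cf k p m 2) - 3 * cf k p m q)) := by
  have hRR := hRmul k
  set v : Fin 3 → ℝ := fun r => p (corner (k+2) r) with hv
  set B := bet k
  set R := Rr k
  have hc : ∀ a b : Fin 3, cf k p a b = (1 - 3*R/2) * v a + (R/2) * v b + R * v (oth a b) :=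
    fun a b => rfl
  rcases fin3_all m with rfl | rfl | rfl <;> rcases fin3_all q with rfl | rfl | rfl <;>
    first
      | exact absurd rfl hmq
      | (simp only [hc, oth00, oth01, oth02, oth10, oth11, oth12, oth20, oth21, oth22]
         first
          | linear_combination (v 2 - v 0)/2 * hRR
          | linear_combination (v 1 - v 0)/2 * hRR
          | linear_combination (v 2 - v 1)/2 * hRR
          | linear_combination (v 0 - v 1)/2 * hRR
          | linear_combination (v 1 - v 2)/2 * hRR
          | linear_combination (v 0 - v 2)/2 * hRR)

lemma fa01 : (0:Fin 3) + 1 = 1 := by decide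
lemma fa02 : (0:Fin 3) + 2 = 2 := by decide
lemma fa11 : (1:Fin 3) + 1 = 2 := by decide
lemma fa12 : (1:Fin 3) + 2 = 0 := by decide
lemma fa21 : (2:Fin 3) + 1 = 0 := by decide
lemma fa22 : (2:Fin 3) + 2 = 1 := by decide

lemma iface_val_of (k : ℕ) (IH : OS k) (p : (Fin (k+2) → Fin 3) → ℝ)
    (hp : ∀ s, (∀ r : Fin 3, s ≠ corner (k+2) r) →
      p s = (1 / ((hanoi (k+2)).degree s : ℝ)) * ∑ t ∈ (hanoi (k+2)).neighborFinset s, p t) :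
    ∀ m q : Fin 3, m ≠ q → Xf k p m q = cf k p m q := by
  have hB := bet_pos k
  have hyeq : ∀ m q : Fin 3, m ≠ q →
      (1 + 2 * bet k) * (Xf k p m q - cf k p m q) =
        bet k * (Xf k p m (oth m q) - cf k p m (oth m q)) +
          (Xf k p (oth m q) q - cf k p (oth m q) q) := by
    intro m q hmq
    have e1 := key_eq k p hp IH m q hmq
    have e2 := cand_eq k p m q hmq
    have e3 : (Xf k p m 0 - cf k p m 0) + (Xf k p m 1 - cf k p m 1) + (Xf k p m 2 - cf k p m 2)
        = (Xf k p m q - cf k p m q) + (Xf k p m (oth m q) - cf k p m (oth m q)) := by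
      rcases fin3_all m with rfl | rfl | rfl <;> rcases fin3_all q with rfl | rfl | rfl <;>
        first
          | exact absurd rfl hmq
          | (simp only [oth01, oth02, oth10, oth12, oth20, oth21, Xf_diag, cf_diag]; ring)
    linear_combination e1 - e2 + bet k * e3
  obtain ⟨z, hzT, hmax⟩ := Finset.exists_max_image
    (Finset.univ.filter (fun z : Fin 3 × Fin 3 => z.1 ≠ z.2))
    (fun z => |Xf k p z.1 z.2 - cf k p z.1 z.2|)
    ⟨((0:Fin 3), (1:Fin 3)), Finset.mem_filter.mpr ⟨Finset.mem_univ _, by decide⟩⟩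
  have hz : z.1 ≠ z.2 := (Finset.mem_filter.mp hzT).2
  set M := |Xf k p z.1 z.2 - cf k p z.1 z.2| with hM
  have hmem1 : ((z.1, oth z.1 z.2) : Fin 3 × Fin 3) ∈
      Finset.univ.filter (fun z : Fin 3 × Fin 3 => z.1 ≠ z.2) :=
    Finset.mem_filter.mpr ⟨Finset.mem_univ _, (oth_ne_left hz).symm⟩
  have hmem2 : ((oth z.1 z.2, z.2) : Fin 3 × Fin 3) ∈
      Finset.univ.filter (fun z : Fin 3 × Fin 3 => z.1 ≠ z.2) :=
    Finset.mem_filter.mpr ⟨Finset.mem_univ _, oth_ne_right hz⟩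
  have key := hyeq z.1 z.2 hz
  have hb1 := hmax _ hmem1
  have hb2 := hmax _ hmem2
  have habs : (1 + 2 * bet k) * M ≤ bet k * M + M := by
    have h0 : (1 + 2 * bet k) * M =
        |(1 + 2 * bet k) * (Xf k p z.1 z.2 - cf k p z.1 z.2)| := by
      rw [abs_mul, abs_of_pos (by linarith : (0:ℝ) < 1 + 2 * bet k)]
    rw [h0, key]
    calc |bet k * (Xf k p z.1 (oth z.1 z.2) - cf k p z.1 (oth z.1 z.2)) +
          (Xf k p (oth z.1 z.2) z.2 - cf k p (oth z.1 z.2) z.2)|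
        ≤ |bet k * (Xf k p z.1 (oth z.1 z.2) - cf k p z.1 (oth z.1 z.2))| +
          |Xf k p (oth z.1 z.2) z.2 - cf k p (oth z.1 z.2) z.2| := abs_add_le _ _
      _ = bet k * |Xf k p z.1 (oth z.1 z.2) - cf k p z.1 (oth z.1 z.2)| +
          |Xf k p (oth z.1 z.2) z.2 - cf k p (oth z.1 z.2) z.2| := by
            rw [abs_mul, abs_of_pos hB]
      _ ≤ bet k * M + M := by
            have := mul_le_mul_of_nonneg_left hb1 hB.le
            linarith [hb2, this]
  have hM0 : M ≤ 0 := by nlinarith [habs, hB]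
  intro m q hmq
  have hle : |Xf k p m q - cf k p m q| ≤ M :=
    hmax (m, q) (Finset.mem_filter.mpr ⟨Finset.mem_univ _, hmq⟩)
  have : |Xf k p m q - cf k p m q| = 0 :=
    le_antisymm (hle.trans hM0) (abs_nonneg _)
  have := abs_eq_zero.mp this
  linarith [this]

lemma bet_succ (k : ℕ) : bet (k+1) = 3 * bet k * Rr k / 2 := by
  have h1 : (0:ℝ) < 5^(k+1) - 3^(k+1) := by have := pow53 k; linarith
  have h2 : (0:ℝ) < 5^(k+2) - 3^(k+2) := by have := pow53 (k+1); linarith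
  have h3 := base_pos k
  have h4 : 5 + 3 * bet k = ((5:ℝ)^(k+2) - 3^(k+2)) / (5^(k+1) - 3^(k+1)) := by
    unfold bet
    field_simp
    ring
  show bet (k+1) = 3 * bet k * (2 / (5 + 3 * bet k)) / 2
  rw [h4]
  unfold bet
  rw [div_div_eq_mul_div]
  field_simp
  ring

lemma osum : ∀ k : ℕ, OS k := by
  intro k
  induction k with
  | zero =>
    intro p hp q
    rw [nb_corner q]
    have hupd : ∀ r : Fin 3, Function.update (corner 1 q) 0 r = corner 1 r := by
      intro r; funext j
      have hj : j = 0 := Subsingleton.elim j 0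
      subst hj; rw [Function.update_self]; rfl
    have hne : Function.update (corner 1 q) 0 (q+1) ≠ Function.update (corner 1 q) 0 (q+2) := by
      intro h
      have := congrFun h 0
      rw [Function.update_self, Function.update_self] at this
      exact fin3_succ_ne q this
    rw [Finset.sum_pair hne, hupd, hupd, Fin.sum_univ_three]
    have hb : bet 0 = 1 := by unfold bet; norm_num
    rw [hb]
    rcases fin3_all q with rfl | rfl | rfl <;>
      simp only [fa01, fa02, fa11, fa12, fa21, fa22] <;> ring
  | succ k ih =>
    intro p hp q
    rw [nb_corner_snoc q, Finset.sum_image (fun a _ b _ h => snoc_injective q h)]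
    have e3 : (∑ t ∈ (hanoi (k+1)).neighborFinset (fun _ : Fin (k+1) => q), p (Fin.snoc t q))
        = 2 * Xf k p q q + bet k * ((Xf k p q 0 + Xf k p q 1 + Xf k p q 2) - 3 * Xf k p q q) := by
      have h2 := ih (fun s => p (Fin.snoc s q)) (hrec_snoc p hp q) q
      rw [Fin.sum_univ_three] at h2
      exact h2
    show (∑ t ∈ (hanoi (k+1)).neighborFinset (fun _ : Fin (k+1) => q), p (Fin.snoc t q)) = _
    rw [e3, Fin.sum_univ_three]
    have hiv := iface_val_of k ih p hp
    have hB' := bet_succ k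
    rcases fin3_all q with rfl | rfl | rfl <;>
      [ (rw [Xf_diag, hiv 0 1 (by decide), hiv 0 2 (by decide)];
         simp only [cf, oth01, oth02];
         linear_combination (2 * p (corner (k+2) 0) - p (corner (k+2) 1) - p (corner (k+2) 2)) * hB');
        (rw [Xf_diag, hiv 1 0 (by decide), hiv 1 2 (by decide)];
         simp only [cf, oth10, oth12];
         linear_combination (2 * p (corner (k+2) 1) - p (corner (k+2) 0) - p (corner (k+2) 2)) * hB');
        (rw [Xf_diag, hiv 2 0 (by decide), hiv 2 1 (by decide)];
         simp only [cf, oth20, oth21];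
         linear_combination (2 * p (corner (k+2) 2) - p (corner (k+2) 0) - p (corner (k+2) 1)) * hB')]

/-- `q₃(n)`, the probability that the random walk started at `s½` first
meets the corner set at `C`, equals `2·(5^(n−1) − 3^(n−1))/(5^n − 3^n)`. -/
theorem hanoi_q_three (n : ℕ) (hn : 1 ≤ n)
    (p : (Fin n → Fin 3) → ℝ)
    (hC : p (corner n 2) = 1) (hA : p (corner n 0) = 0) (hB : p (corner n 1) = 0)
    (hrec : ∀ s, (∀ q : Fin 3, s ≠ corner n q) →
      p s = (1 / ((hanoi n).degree s : ℝ)) * ∑ t ∈ (hanoi n).neighborFinset s, p t) :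
    p (halfState n) = 2 * ((5 : ℝ) ^ (n - 1) - 3 ^ (n - 1)) / ((5 : ℝ) ^ n - 3 ^ n) := by
  obtain ⟨n', rfl⟩ : ∃ m, n = m + 1 := ⟨n - 1, by omega⟩
  cases n' with
  | zero =>
    have h : halfState 1 = corner 1 1 := by
      funext j
      show (if (j : ℕ) < 1 - 1 then (0:Fin 3) else 1) = 1
      simp
    rw [h, hB]
    norm_num
  | succ k =>
    have hhalf : halfState (k+2) = Fin.snoc (fun _ : Fin (k+1) => (0:Fin 3)) 1 := by
      funext j
      induction j using Fin.lastCases with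
      | last =>
        rw [Fin.snoc_last]
        show (if ((Fin.last (k+1)) : ℕ) < (k+2) - 1 then (0:Fin 3) else 1) = 1
        simp [Fin.last]
      | cast i =>
        rw [Fin.snoc_castSucc]
        show (if ((Fin.castSucc i) : ℕ) < (k+2) - 1 then (0:Fin 3) else 1) = 0
        have hi : ((Fin.castSucc i) : ℕ) < k + 1 := i.2
        simp [hi]
        exact Nat.le_of_lt_succ i.2
    have hiv := iface_val_of k (osum k) p hrec 1 0 (by decide)
    have hx : p (halfState (k+2)) = Xf k p 1 0 := by rw [hhalf]; rfl
    rw [hx, hiv, cf, oth10, hA, hB, hC]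
    have h1 : (0:ℝ) < 5^(k+1) - 3^(k+1) := by have := pow53 k; linarith
    have h2 : (0:ℝ) < 5^(k+2) - 3^(k+2) := by have := pow53 (k+1); linarith
    have hsub : (k + 2) - 1 = k + 1 := rfl
    rw [hsub]
    show (1 - 3 * Rr k / 2) * 0 + (Rr k / 2) * 0 + Rr k * 1
        = 2 * ((5:ℝ)^(k+1) - 3^(k+1)) / ((5:ℝ)^(k+2) - 3^(k+2))
    have h4 : 5 + 3 * bet k = ((5:ℝ)^(k+2) - 3^(k+2)) / (5^(k+1) - 3^(k+1)) := by
      unfold bet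
      field_simp
      ring
    show (1 - 3 * (2 / (5 + 3 * bet k)) / 2) * 0 + ((2 / (5 + 3 * bet k)) / 2) * 0
        + (2 / (5 + 3 * bet k)) * 1 = _
    rw [h4]
    field_simp
    ring
end

section
/- Let n ≥ 1. On the Hanoi graph H_n, let g satisfy g(C) = 0 and g(s) = 1 + (1/deg s)·Σ_{t adjacent to s} g(t) for all s ≠ C; let h satisfy h = 0 on {A, B, C} and h(s) = 1 + (1/deg s)·Σ_{t adjacent to s} h(t) for all non-corner s; and let p satisfy p(C) = 1, p(A) = p(B) = 0, and p(s) = (1/deg s)·Σ_{t adjacent to s} p(t) for all non-corner s. Then g(A)·((1/2)·Σ_{t adjacent to A} p(t)) = 1 + (1/2)·Σ_{t adjacent to A} h(t). (Lemma 2 of the paper: E_{1→3}(n) = E_{1→a}(n)/p₂(n).) -/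
namespace HL2

/-- the smallest disk can always move: positive degree -/
lemma degree_pos (n : ℕ) (hn : 1 ≤ n) (s : Fin n → Fin 3) : 0 < (hanoi n).degree s := by
  rw [SimpleGraph.degree_pos_iff_exists_adj]
  set k0 : Fin n := ⟨0, hn⟩
  refine ⟨Function.update s k0 (if s k0 = 0 then 1 else 0), k0, ?_, ?_, ?_⟩
  · intro j hj; rw [Function.update_of_ne hj]
  · rw [Function.update_self]
    split_ifs with hh
    · rw [hh]; decide
    · exact hh
  · intro j hj
    exact absurd hj (by simp [k0, Fin.lt_def])

/-- composing with a permutation of pegs preserves adjacency -/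
lemma adj_comp (n : ℕ) (e : Fin 3 ≃ Fin 3) {s t : Fin n → Fin 3}
    (h : (hanoi n).Adj s t) : (hanoi n).Adj (fun i => e (s i)) (fun i => e (t i)) := by
  obtain ⟨k, h1, h2, h3⟩ := h
  exact ⟨k, fun j hj => congrArg e (h1 j hj), fun hc => h2 (e.injective hc),
    fun j hj => ⟨fun hc => (h3 j hj).1 (e.injective hc),
      fun hc => (h3 j hj).2 (e.injective hc)⟩⟩

lemma comp_injective (n : ℕ) (e : Fin 3 ≃ Fin 3) :
    Function.Injective (fun (t : Fin n → Fin 3) i => e (t i)) :=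
  fun a b hab => funext fun i => e.injective (congrFun hab i)

lemma neighborFinset_comp (n : ℕ) (e : Fin 3 ≃ Fin 3) (s : Fin n → Fin 3) :
    (hanoi n).neighborFinset (fun i => e (s i)) =
      ((hanoi n).neighborFinset s).image (fun t i => e (t i)) := by
  ext t
  simp only [SimpleGraph.mem_neighborFinset, Finset.mem_image]
  constructor
  · intro hadj
    refine ⟨fun i => e.symm (t i), ?_, by funext i; simp⟩
    have := adj_comp n e.symm hadj
    simpa using this
  · rintro ⟨u, hu, rfl⟩
    exact adj_comp n e hu

lemma degree_comp (n : ℕ) (e : Fin 3 ≃ Fin 3) (s : Fin n → Fin 3) :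
    (hanoi n).degree (fun i => e (s i)) = (hanoi n).degree s := by
  rw [← SimpleGraph.card_neighborFinset_eq_degree, ← SimpleGraph.card_neighborFinset_eq_degree,
    neighborFinset_comp, Finset.card_image_of_injective _ (comp_injective n e)]

lemma sum_comp (n : ℕ) (e : Fin 3 ≃ Fin 3) (s : Fin n → Fin 3) (F : (Fin n → Fin 3) → ℝ) :
    ∑ t ∈ (hanoi n).neighborFinset (fun i => e (s i)), F t
      = ∑ t ∈ (hanoi n).neighborFinset s, F (fun i => e (t i)) := by
  rw [neighborFinset_comp, Finset.sum_image (fun a _ b _ hab => comp_injective n e hab)]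

lemma third_peg : ∀ p q : Fin 3, p ≠ q → ∃ a : Fin 3, a ≠ p ∧ a ≠ q := by decide

/-- appending a fixed largest disk is a graph hom `H_n → H_{n+1}` -/
def snocHom (n : ℕ) (p : Fin 3) : hanoi n →g hanoi (n + 1) where
  toFun s := Fin.snoc s p
  map_rel' := by
    rintro s t ⟨k, h1, h2, h3⟩
    refine ⟨k.castSucc, ?_, ?_, ?_⟩
    · intro j hj
      induction j using Fin.lastCases with
      | last => simp
      | cast i =>
        have : i ≠ k := fun hik => hj (by rw [hik])
        simp [Fin.snoc_castSucc, h1 i this]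
    · simpa [Fin.snoc_castSucc] using h2
    · intro j hj
      have hjne : j ≠ Fin.last n := by
        intro hj'
        rw [hj', Fin.lt_def] at hj
        simp only [Fin.val_last, Fin.coe_castSucc] at hj
        omega
      obtain ⟨i, rfl⟩ := Fin.exists_castSucc_eq.mpr hjne
      have hik : i < k := Fin.castSucc_lt_castSucc_iff.mp hj
      simpa [Fin.snoc_castSucc] using h3 i hik

lemma corner_snoc (n : ℕ) (q : Fin 3) :
    corner (n + 1) q = Fin.snoc (corner n q) q := by
  funext j
  induction j using Fin.lastCases <;> simp [corner]

lemma reach_corner : ∀ (n : ℕ) (s : Fin n → Fin 3) (q : Fin 3),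
    (hanoi n).Reachable s (corner n q) := by
  intro n
  induction n with
  | zero =>
    intro s q
    have : s = corner 0 q := funext fun i => i.elim0
    rw [this]
  | succ n ih =>
    intro s q
    have hs : s = Fin.snoc (Fin.init s) (s (Fin.last n)) := (Fin.snoc_init_self s).symm
    set p : Fin 3 := s (Fin.last n) with hp
    have lift : ∀ (a : Fin 3) (u v : Fin n → Fin 3), (hanoi n).Reachable u v →
        (hanoi (n + 1)).Reachable (Fin.snoc u a) (Fin.snoc v a) :=
      fun a u v huv => huv.map (snocHom n a)
    by_cases hpq : p = q
    · rw [hs, hpq, corner_snoc]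
      exact lift q _ _ (ih _ q)
    · obtain ⟨a, hap, haq⟩ := third_peg p q hpq
      have step : (hanoi (n + 1)).Adj (Fin.snoc (corner n a) p) (Fin.snoc (corner n a) q) := by
        refine ⟨Fin.last n, ?_, ?_, ?_⟩
        · intro j hj
          obtain ⟨i, rfl⟩ := Fin.exists_castSucc_eq.mpr hj
          simp
        · simpa using hpq
        · intro j hj
          obtain ⟨i, rfl⟩ := Fin.exists_castSucc_eq.mpr hj.ne
          simp [corner, hap, haq]
      have r1 : (hanoi (n + 1)).Reachable s (Fin.snoc (corner n a) p) := by
        rw [hs]; exact lift p _ _ (ih _ a)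
      have r2 : (hanoi (n + 1)).Reachable (Fin.snoc (corner n a) q) (corner (n + 1) q) := by
        rw [corner_snoc]
        exact lift q _ _ (ih _ q)
      exact (r1.trans step.reachable).trans r2

lemma hanoi_preconnected (n : ℕ) : (hanoi n).Preconnected := fun s t =>
  (reach_corner n s 0).trans (reach_corner n t 0).symm

lemma harmonic_le (n : ℕ) (hn : 1 ≤ n) (T : Set (Fin n → Fin 3)) (c : Fin n → Fin 3)
    (hc : c ∈ T) (d : (Fin n → Fin 3) → ℝ) (hdT : ∀ s ∈ T, d s = 0)
    (hd : ∀ s ∉ T, d s = (1 / ((hanoi n).degree s : ℝ)) *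
      ∑ t ∈ (hanoi n).neighborFinset s, d t) :
    ∀ s, d s ≤ 0 := by
  obtain ⟨s₀, -, hmax⟩ := Finset.exists_max_image Finset.univ d ⟨_, Finset.mem_univ c⟩
  simp only [Finset.mem_univ, forall_true_left, true_implies] at hmax
  set M := d s₀ with hM
  have hmax' : ∀ t, d t ≤ M := hmax
  suffices hM0 : M ≤ 0 by
    intro s; exact le_trans (hmax' s) hM0
  obtain ⟨w⟩ := hanoi_preconnected n s₀ c
  clear hmax
  have key : ∀ (s : Fin n → Fin 3) (w : (hanoi n).Walk s c), d s = M → M ≤ 0 := by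
    intro s w
    induction w with
    | nil => intro hs; rw [← hs, hdT _ hc]
    | @cons u v c' hadj w' ih =>
      intro hs
      by_cases hsT : u ∈ T
      · rw [← hs, hdT _ hsT]
      · have hdeg : (0 : ℝ) < ((hanoi n).degree u : ℝ) := by
          exact_mod_cast degree_pos n hn u
        have h' : M = (1 / ((hanoi n).degree u : ℝ)) *
            ∑ t ∈ (hanoi n).neighborFinset u, d t := by
          rw [← hs]; exact hd u hsT
        have hsum : ∑ t ∈ (hanoi n).neighborFinset u, d t
            = ((hanoi n).degree u : ℝ) * M := by
          field_simp at h'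
          linarith
        have hall : ∀ t ∈ (hanoi n).neighborFinset u, d t = M := by
          by_contra hcon
          push_neg at hcon
          obtain ⟨t₀, ht₀, ht₀ne⟩ := hcon
          have hlt : d t₀ < M := lt_of_le_of_ne (hmax' t₀) ht₀ne
          have hstrict : ∑ t ∈ (hanoi n).neighborFinset u, d t
              < ((hanoi n).degree u : ℝ) * M := by
            have := Finset.sum_lt_sum (g := fun _ => M)
              (fun i (_ : i ∈ (hanoi n).neighborFinset u) => hmax' i) ⟨t₀, ht₀, hlt⟩
            rwa [Finset.sum_const, SimpleGraph.card_neighborFinset_eq_degree,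
              nsmul_eq_mul] at this
          exact (ne_of_lt hstrict) hsum
        exact ih hc w (hall v ((SimpleGraph.mem_neighborFinset (hanoi n) u v).mpr hadj))
  exact key s₀ w rfl

lemma harmonic_zero (n : ℕ) (hn : 1 ≤ n) (T : Set (Fin n → Fin 3)) (c : Fin n → Fin 3)
    (hc : c ∈ T) (d : (Fin n → Fin 3) → ℝ) (hdT : ∀ s ∈ T, d s = 0)
    (hd : ∀ s ∉ T, d s = (1 / ((hanoi n).degree s : ℝ)) *
      ∑ t ∈ (hanoi n).neighborFinset s, d t) :
    ∀ s, d s = 0 := by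
  have h1 := harmonic_le n hn T c hc d hdT hd
  have h2 := harmonic_le n hn T c hc (fun s => -d s)
    (fun s hs => by show -d s = 0; rw [hdT s hs, neg_zero])
    (fun s hs => by
      show -d s = (1 / ((hanoi n).degree s : ℝ)) * ∑ t ∈ (hanoi n).neighborFinset s, -d t
      rw [hd s hs, Finset.sum_neg_distrib, mul_neg])
  intro s
  have h2' : -d s ≤ 0 := h2 s
  have := h1 s
  linarith

lemma corner_ne (n : ℕ) (hn : 1 ≤ n) {a b : Fin 3} (hab : a ≠ b) :
    corner n a ≠ corner n b := fun hc => hab (congrFun hc ⟨0, hn⟩)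

lemma adj_corner_iff (n : ℕ) (hn : 1 ≤ n) (t : Fin n → Fin 3) :
    (hanoi n).Adj (corner n 0) t ↔
      t = Function.update (corner n 0) ⟨0, hn⟩ 1 ∨
      t = Function.update (corner n 0) ⟨0, hn⟩ 2 := by
  set k0 : Fin n := ⟨0, hn⟩
  constructor
  · rintro ⟨k, h1, h2, h3⟩
    have hk : k = k0 := by
      by_contra hk
      have hlt : k0 < k := by
        rw [Fin.lt_def]
        show 0 < (k : ℕ)
        rcases Nat.eq_zero_or_pos (k : ℕ) with h0 | h0
        · exact absurd (Fin.ext h0) hk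
        · exact h0
      exact (h3 k0 hlt).1 rfl
    subst hk
    have ht : t = Function.update (corner n 0) k0 (t k0) := by
      funext j
      by_cases hj : j = k0
      · subst hj; rw [Function.update_self]
      · rw [Function.update_of_ne hj]
        exact (h1 j hj).symm
    have h2' : t k0 ≠ 0 := fun hc => h2 (by rw [hc]; rfl)
    have : t k0 = 1 ∨ t k0 = 2 := by
      have hlt3 : (t k0 : ℕ) < 3 := (t k0).is_lt
      have h0 : (t k0 : ℕ) ≠ 0 := fun hc => h2' (Fin.ext hc)
      have : (t k0 : ℕ) = 1 ∨ (t k0 : ℕ) = 2 := by omega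
      rcases this with hv | hv
      · exact Or.inl (Fin.ext hv)
      · exact Or.inr (Fin.ext hv)
    rcases this with hv | hv
    · left; rw [ht, hv]
    · right; rw [ht, hv]
  · intro ht
    have : ∀ v : Fin 3, v ≠ 0 →
        (hanoi n).Adj (corner n 0) (Function.update (corner n 0) k0 v) := by
      intro v hv
      refine ⟨k0, ?_, ?_, ?_⟩
      · intro j hj; rw [Function.update_of_ne hj]
      · rw [Function.update_self]; exact fun hc => hv hc.symm
      · intro j hj
        exact absurd hj (by simp [k0, Fin.lt_def])
    rcases ht with rfl | rfl
    · exact this 1 (by decide)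
    · exact this 2 (by decide)

lemma degree_corner (n : ℕ) (hn : 1 ≤ n) : (hanoi n).degree (corner n 0) = 2 := by
  rw [← SimpleGraph.card_neighborFinset_eq_degree]
  have hset : (hanoi n).neighborFinset (corner n 0) =
      {Function.update (corner n 0) ⟨0, hn⟩ 1, Function.update (corner n 0) ⟨0, hn⟩ 2} := by
    ext t
    rw [SimpleGraph.mem_neighborFinset, adj_corner_iff n hn t, Finset.mem_insert,
      Finset.mem_singleton]
  rw [hset, Finset.card_insert_of_notMem, Finset.card_singleton]
  rw [Finset.mem_singleton]
  intro hc
  have := congrFun hc ⟨0, hn⟩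
  rw [Function.update_self, Function.update_self] at this
  exact absurd this (by decide)

end HL2

/-- Lemma 2 of the paper: `E_{1→3}(n) = E_{1→a}(n)/p₂(n)`, stated as
`E_{1→3}(n) · p₂(n) = E_{1→a}(n)`. -/
theorem hanoi_lemma2 (n : ℕ) (hn : 1 ≤ n)
    (g h p : (Fin n → Fin 3) → ℝ)
    (hgC : g (corner n 2) = 0)
    (hgrec : ∀ s, s ≠ corner n 2 →
      g s = 1 + (1 / ((hanoi n).degree s : ℝ)) * ∑ t ∈ (hanoi n).neighborFinset s, g t)
    (hhcorner : ∀ q : Fin 3, h (corner n q) = 0)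
    (hhrec : ∀ s, (∀ q : Fin 3, s ≠ corner n q) →
      h s = 1 + (1 / ((hanoi n).degree s : ℝ)) * ∑ t ∈ (hanoi n).neighborFinset s, h t)
    (hpC : p (corner n 2) = 1) (hpA : p (corner n 0) = 0) (hpB : p (corner n 1) = 0)
    (hprec : ∀ s, (∀ q : Fin 3, s ≠ corner n q) →
      p s = (1 / ((hanoi n).degree s : ℝ)) * ∑ t ∈ (hanoi n).neighborFinset s, p t) :
    g (corner n 0) * ((1 / 2 : ℝ) * ∑ t ∈ (hanoi n).neighborFinset (corner n 0), p t)
      = 1 + (1 / 2 : ℝ) * ∑ t ∈ (hanoi n).neighborFinset (corner n 0), h t := by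
  -- peg swap 0 ↔ 1
  set e : Fin 3 ≃ Fin 3 := Equiv.swap 0 1 with he
  have he2 : e 2 = 2 := by decide
  have he0 : e 0 = 1 := by decide
  have hcornerC : (fun i => e (corner n 2 i)) = corner n 2 := by
    funext i; show e 2 = 2; exact he2
  -- Step 1: g(A) = g(B) by symmetry
  have hAB : g (corner n 0) = g (corner n 1) := by
    have hzero := HL2.harmonic_zero n hn {corner n 2} (corner n 2) rfl
      (fun s => g s - g (fun i => e (s i)))
      (by
        rintro s rfl
        rw [hcornerC, sub_self])
      (by
        intro s hs
        have hsne : s ≠ corner n 2 := hs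
        have hsne' : (fun i => e (s i)) ≠ corner n 2 := by
          intro hc
          apply hsne
          funext i
          have h1 : e (s i) = 2 := congrFun hc i
          have h2 : s i = e.symm (2 : Fin 3) := by rw [← h1]; exact (e.symm_apply_apply _).symm
          rw [h2]; show e.symm 2 = 2; decide
        rw [hgrec s hsne, hgrec _ hsne', HL2.degree_comp, HL2.sum_comp,
          Finset.sum_sub_distrib, mul_sub]
        ring)
    have h0 := hzero (corner n 0)
    have heq : (fun i => e (corner n 0 i)) = corner n 1 := by
      funext i; show e 0 = 1; exact he0
    rw [heq] at h0
    linarith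
  -- Step 2: f ≡ 0
  have hcornersT : ∀ s : Fin n → Fin 3,
      s ∉ ({corner n 0, corner n 1, corner n 2} : Set (Fin n → Fin 3)) →
      ∀ q : Fin 3, s ≠ corner n q := by
    intro s hs q hc
    apply hs
    have hq : q = 0 ∨ q = 1 ∨ q = 2 := by omega
    rcases hq with rfl | rfl | rfl
    · exact Or.inl hc
    · exact Or.inr (Or.inl hc)
    · exact Or.inr (Or.inr hc)
  have hfzero := HL2.harmonic_zero n hn {corner n 0, corner n 1, corner n 2} (corner n 0)
    (Or.inl rfl)
    (fun s => g s - g (corner n 0) + g (corner n 0) * p s - h s)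
    (by
      rintro s (rfl | rfl | rfl)
      · rw [hpA, hhcorner 0]; ring
      · rw [hpB, hhcorner 1, hAB]; ring
      · rw [hpC, hhcorner 2, hgC]; ring)
    (by
      intro s hs
      have hq := hcornersT s hs
      have hD : ((hanoi n).degree s : ℝ) ≠ 0 := by
        have := HL2.degree_pos n hn s
        positivity
      have hsum : ∑ t ∈ (hanoi n).neighborFinset s, (g t - g (corner n 0) + g (corner n 0) * p t - h t)
          = (∑ t ∈ (hanoi n).neighborFinset s, g t)
            - ((hanoi n).degree s : ℝ) * g (corner n 0)
            + g (corner n 0) * (∑ t ∈ (hanoi n).neighborFinset s, p t)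
            - (∑ t ∈ (hanoi n).neighborFinset s, h t) := by
        rw [Finset.sum_sub_distrib, Finset.sum_add_distrib, Finset.sum_sub_distrib,
          Finset.sum_const, ← Finset.mul_sum, SimpleGraph.card_neighborFinset_eq_degree,
          nsmul_eq_mul]
      rw [hgrec s (hq 2), hhrec s hq, hprec s hq, hsum]
      field_simp
      ring)
  -- Step 3: conclude
  have hAne : corner n 0 ≠ corner n 2 := HL2.corner_ne n hn (by decide)
  have hgA := hgrec _ hAne
  rw [HL2.degree_corner n hn] at hgA
  have hsub : ∀ t ∈ (hanoi n).neighborFinset (corner n 0),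
      g t = g (corner n 0) - g (corner n 0) * p t + h t := by
    intro t _
    have := hfzero t
    linarith
  have hSG : ∑ t ∈ (hanoi n).neighborFinset (corner n 0), g t
      = 2 * g (corner n 0) - g (corner n 0) * (∑ t ∈ (hanoi n).neighborFinset (corner n 0), p t)
        + (∑ t ∈ (hanoi n).neighborFinset (corner n 0), h t) := by
    rw [Finset.sum_congr rfl hsub, Finset.sum_add_distrib, Finset.sum_sub_distrib,
      Finset.sum_const, ← Finset.mul_sum, SimpleGraph.card_neighborFinset_eq_degree,
      HL2.degree_corner n hn, nsmul_eq_mul]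
    push_cast
    ring
  rw [hSG] at hgA
  linear_combination hgA
end

section
/- Let n ≥ 2. Let h_n : (Fin n → Fin 3) → ℝ and h_{n−1} : (Fin (n−1) → Fin 3) → ℝ each satisfy: h = 0 on the corner set {A, B, C} of its Hanoi graph and h(s) = 1 + (1/deg s)·Σ_{t adjacent to s} h(t) for every non-corner state s. Then 1 + (1/2)·Σ_{t adjacent to A in H_n} h_n(t) = 3·(1 + (1/2)·Σ_{t adjacent to A in H_{n−1}} h_{n−1}(t)) + 1. (The recurrence E_{1→a}(n) = 3·E_{1→a}(n−1) + 1.) -/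
namespace HG
open Finset SimpleGraph

variable {m : ℕ}

lemma adj_comp (σ : Equiv.Perm (Fin 3)) {s t : Fin m → Fin 3} (h : (hanoi m).Adj s t) :
    (hanoi m).Adj (σ ∘ s) (σ ∘ t) := by
  obtain ⟨k, h1, h2, h3⟩ := h
  refine ⟨k, fun j hj => ?_, fun hc => h2 (σ.injective hc), fun j hj => ?_⟩
  · simp only [Function.comp_apply, h1 j hj]
  · exact ⟨fun hc => (h3 j hj).1 (σ.injective hc), fun hc => (h3 j hj).2 (σ.injective hc)⟩

lemma comp_inv_comp (σ : Equiv.Perm (Fin 3)) (s : Fin m → Fin 3) :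
    (⇑σ⁻¹) ∘ (⇑σ ∘ s) = s := by
  funext j; simp

lemma comp_injective (σ : Equiv.Perm (Fin 3)) :
    Function.Injective (fun t : Fin m → Fin 3 => ⇑σ ∘ t) := by
  intro a b h
  funext j
  exact σ.injective (congrFun h j)

lemma neighborFinset_comp (σ : Equiv.Perm (Fin 3)) (s : Fin m → Fin 3) :
    (hanoi m).neighborFinset (⇑σ ∘ s) = ((hanoi m).neighborFinset s).image (fun t => ⇑σ ∘ t) := by
  ext u
  simp only [mem_neighborFinset, mem_image]
  constructor
  · intro h
    refine ⟨⇑σ⁻¹ ∘ u, ?_, ?_⟩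
    · have h2 := adj_comp σ⁻¹ h
      rwa [comp_inv_comp] at h2
    · funext j; simp
  · rintro ⟨t, ht, rfl⟩
    exact adj_comp σ ht

lemma degree_comp (σ : Equiv.Perm (Fin 3)) (s : Fin m → Fin 3) :
    (hanoi m).degree (⇑σ ∘ s) = (hanoi m).degree s := by
  classical
  rw [← card_neighborFinset_eq_degree, ← card_neighborFinset_eq_degree,
    neighborFinset_comp, Finset.card_image_of_injective _ (comp_injective σ)]

lemma sum_nbr_comp (σ : Equiv.Perm (Fin 3)) (s : Fin m → Fin 3) (f : (Fin m → Fin 3) → ℝ) :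
    ∑ u ∈ (hanoi m).neighborFinset (⇑σ ∘ s), f u
      = ∑ t ∈ (hanoi m).neighborFinset s, f (⇑σ ∘ t) := by
  classical
  rw [neighborFinset_comp, Finset.sum_image (fun a _ b _ h => comp_injective σ h)]

lemma corner_comp (σ : Equiv.Perm (Fin 3)) (p : Fin 3) :
    ⇑σ ∘ corner m p = corner m (σ p) := rfl

lemma corner_succ (p : Fin 3) : corner (m+1) p = Fin.snoc (corner m p) p := by
  funext j
  refine Fin.lastCases ?_ ?_ j <;> simp [corner, Fin.snoc_last, Fin.snoc_castSucc]

lemma snoc_comp (σ : Equiv.Perm (Fin 3)) (s : Fin m → Fin 3) (p : Fin 3) :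
    ⇑σ ∘ Fin.snoc s p = Fin.snoc (⇑σ ∘ s) (σ p) := by
  funext j
  refine Fin.lastCases ?_ ?_ j <;> simp [Fin.snoc_last, Fin.snoc_castSucc]

lemma snoc_inj {s t : Fin m → Fin 3} {p r : Fin 3} (h : Fin.snoc s p = (Fin.snoc t r : Fin (m+1) → Fin 3)) :
    s = t ∧ p = r := by
  constructor
  · funext j
    have := congrFun h j.castSucc
    simpa [Fin.snoc_castSucc] using this
  · have := congrFun h (Fin.last m)
    simpa [Fin.snoc_last] using this



lemma adj_snoc_iff {p : Fin 3} {s : Fin m → Fin 3} {u : Fin (m+1) → Fin 3} :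
    (hanoi (m+1)).Adj (Fin.snoc s p) u ↔
      (∃ t, (hanoi m).Adj s t ∧ u = Fin.snoc t p) ∨
      (∃ p' : Fin 3, p' ≠ p ∧ (∀ j, s j ≠ p ∧ s j ≠ p') ∧ u = Fin.snoc s p') := by
  constructor
  · rintro ⟨k, h1, h2, h3⟩
    rcases Fin.eq_castSucc_or_eq_last k with ⟨k', rfl⟩ | rfl
    · left
      refine ⟨fun j => u j.castSucc, ⟨k', fun j hj => ?_, ?_, fun j hj => ?_⟩, ?_⟩
      · have := h1 j.castSucc (by simpa [Fin.castSucc_inj] using hj)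
        simpa [Fin.snoc_castSucc] using this
      · simpa [Fin.snoc_castSucc] using h2
      · have := h3 j.castSucc (by simpa [Fin.castSucc_lt_castSucc_iff] using hj)
        simpa [Fin.snoc_castSucc] using this
      · funext j
        refine Fin.lastCases ?_ ?_ j
        · have := h1 (Fin.last m) (Fin.castSucc_lt_last k').ne'
          simp only [Fin.snoc_last] at this ⊢
          exact this.symm
        · intro j; simp [Fin.snoc_castSucc]
    · right
      refine ⟨u (Fin.last m), ?_, fun j => ?_, ?_⟩
      · simpa [Fin.snoc_last] using Ne.symm h2
      · have := h3 j.castSucc (Fin.castSucc_lt_last j)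
        simpa [Fin.snoc_castSucc, Fin.snoc_last] using this
      · funext j
        refine Fin.lastCases ?_ ?_ j
        · simp [Fin.snoc_last]
        · intro j
          have := h1 j.castSucc (Fin.castSucc_lt_last j).ne
          simp only [Fin.snoc_castSucc] at this ⊢
          exact this.symm
  · rintro (⟨t, ⟨k, h1, h2, h3⟩, rfl⟩ | ⟨p', hp', hall, rfl⟩)
    · refine ⟨k.castSucc, fun j => ?_, ?_, fun j => ?_⟩
      · refine Fin.lastCases ?_ ?_ j
        · intro _; simp [Fin.snoc_last]
        · intro j' hj
          have hj' : j' ≠ k := fun h => hj (congrArg Fin.castSucc h)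
          simp only [Fin.snoc_castSucc]
          exact h1 j' hj'
      · simp only [Fin.snoc_castSucc]; exact h2
      · refine Fin.lastCases ?_ ?_ j
        · intro h
          have hk := k.isLt
          simp only [Fin.lt_def, Fin.val_last, Fin.coe_castSucc] at h
          omega
        · intro j' hj
          have hj2 : j' < k := Fin.castSucc_lt_castSucc_iff.mp hj
          simpa [Fin.snoc_castSucc] using h3 j' hj2
    · refine ⟨Fin.last m, fun j => ?_, ?_, fun j => ?_⟩
      · refine Fin.lastCases ?_ ?_ j
        · intro h; exact absurd rfl h
        · intro j' _; simp [Fin.snoc_castSucc]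
      · simp only [Fin.snoc_last]
        exact fun h => hp' h.symm
      · refine Fin.lastCases ?_ ?_ j
        · intro h; exact absurd h (lt_irrefl _)
        · intro j' _
          simpa [Fin.snoc_castSucc, Fin.snoc_last] using hall j'



lemma adj_corner_iff (hm : 0 < m) {p : Fin 3} {u : Fin m → Fin 3} :
    (hanoi m).Adj (corner m p) u ↔
      u ⟨0, hm⟩ ≠ p ∧ u = Function.update (corner m p) ⟨0, hm⟩ (u ⟨0, hm⟩) := by
  constructor
  · rintro ⟨k, h1, h2, h3⟩
    have hk : k = ⟨0, hm⟩ := by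
      by_contra hne
      have hk0 : (k : ℕ) ≠ 0 := fun h => hne (Fin.ext h)
      have hlt : (⟨0, hm⟩ : Fin m) < k := by
        simp only [Fin.lt_def]
        exact Nat.pos_of_ne_zero hk0
      exact (h3 _ hlt).1 rfl
    subst hk
    refine ⟨fun h => h2 h.symm, ?_⟩
    funext j
    by_cases hj : j = ⟨0, hm⟩
    · subst hj; simp [Function.update_self]
    · rw [Function.update_of_ne hj]
      exact (h1 j hj).symm
  · rintro ⟨hne, hu⟩
    rw [hu]
    refine ⟨⟨0, hm⟩, fun j hj => ?_, ?_, fun j hj => ?_⟩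
    · rw [Function.update_of_ne hj]
    · simp only [Function.update_self]
      exact fun h => hne h.symm
    · exact absurd hj (by simp [Fin.lt_def])
  
lemma neighborFinset_corner (hm : 0 < m) (p : Fin 3) :
    (hanoi m).neighborFinset (corner m p) =
      (Finset.univ.erase p).image (fun q => Function.update (corner m p) ⟨0, hm⟩ q) := by
  ext u
  simp only [mem_neighborFinset, mem_image, mem_erase, Finset.mem_univ, and_true]
  rw [adj_corner_iff hm]
  constructor
  · rintro ⟨h1, h2⟩
    exact ⟨u ⟨0, hm⟩, h1, h2.symm⟩
  · rintro ⟨q, hq, rfl⟩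
    simp only [Function.update_self]
    exact ⟨hq, trivial⟩

lemma degree_corner (hm : 0 < m) (p : Fin 3) : (hanoi m).degree (corner m p) = 2 := by
  classical
  rw [← card_neighborFinset_eq_degree, neighborFinset_corner hm p,
    Finset.card_image_of_injective, Finset.card_erase_of_mem (Finset.mem_univ p)]
  · rfl
  · intro a b h
    have := congrFun h ⟨0, hm⟩
    simpa using this

lemma exists_ne (a : Fin 3) : ∃ q, q ≠ a := by fin_cases a <;> decide

lemma degree_pos (hm : 0 < m) (s : Fin m → Fin 3) : 0 < (hanoi m).degree s := by
  classical
  rw [← card_neighborFinset_eq_degree, Finset.card_pos]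
  obtain ⟨q, hq⟩ := exists_ne (s ⟨0, hm⟩)
  refine ⟨Function.update s ⟨0, hm⟩ q, ?_⟩
  rw [mem_neighborFinset]
  refine ⟨⟨0, hm⟩, fun j hj => (Function.update_of_ne hj _ _).symm, ?_, fun j hj => ?_⟩
  · simp only [Function.update_self]
    exact fun h => hq h.symm
  · exact absurd hj (by simp [Fin.lt_def])

def ιHom (p : Fin 3) : hanoi m →g hanoi (m+1) where
  toFun s := Fin.snoc s p
  map_rel' := fun h => adj_snoc_iff.2 (Or.inl ⟨_, h, rfl⟩)

lemma third_peg {p r : Fin 3} (h : p ≠ r) : ∃ q, q ≠ p ∧ q ≠ r := by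
  revert h; revert p r; decide

lemma hanoi_preconnected : ∀ m, (hanoi m).Preconnected := by
  intro m
  induction m with
  | zero =>
    intro u v
    have : u = v := funext fun j => j.elim0
    rw [this]
  | succ m ih =>
    have toCorner : ∀ u : Fin (m+1) → Fin 3,
        (hanoi (m+1)).Reachable u (corner (m+1) (u (Fin.last m))) := by
      intro u
      have h1 : (hanoi (m+1)).Reachable (Fin.snoc (Fin.init u) (u (Fin.last m)))
          (Fin.snoc (corner m (u (Fin.last m))) (u (Fin.last m))) :=
        (ih (Fin.init u) (corner m (u (Fin.last m)))).map (ιHom (u (Fin.last m)))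
      rw [Fin.snoc_init_self] at h1
      rw [corner_succ]
      exact h1
    have corners : ∀ p r, (hanoi (m+1)).Reachable (corner (m+1) p) (corner (m+1) r) := by
      intro p r
      by_cases hpr : p = r
      · rw [hpr]
      · obtain ⟨q, hqp, hqr⟩ := third_peg hpr
        have r1 : (hanoi (m+1)).Reachable (corner (m+1) p) (Fin.snoc (corner m q) p) := by
          have h0 : (hanoi (m+1)).Reachable (Fin.snoc (corner m p) p) (Fin.snoc (corner m q) p) :=
            (ih (corner m p) (corner m q)).map (ιHom p)
          rw [corner_succ]
          exact h0
        have r2 : (hanoi (m+1)).Adj (Fin.snoc (corner m q) p) (Fin.snoc (corner m q) r) :=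
          adj_snoc_iff.2 (Or.inr ⟨r, fun h => hpr h.symm, fun j => ⟨hqp, hqr⟩, rfl⟩)
        have r3 : (hanoi (m+1)).Reachable (Fin.snoc (corner m q) r) (corner (m+1) r) := by
          have h0 : (hanoi (m+1)).Reachable (Fin.snoc (corner m q) r) (Fin.snoc (corner m r) r) :=
            (ih (corner m q) (corner m r)).map (ιHom r)
          rw [corner_succ]
          exact h0
        exact r1.trans (r2.reachable.trans r3)
    intro u v
    exact (toCorner u).trans ((corners _ _).trans (toCorner v).symm)



lemma all_eq_third {p p' c d : Fin 3} (hp : p' ≠ p) (hc1 : c ≠ p) (hc2 : c ≠ p')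
    (hd1 : d ≠ p) (hd2 : d ≠ p') : c = d := by
  have h : ∀ p p' c d : Fin 3, p' ≠ p → c ≠ p → c ≠ p' → d ≠ p → d ≠ p' → c = d := by
    intro p p' c d
    fin_cases p <;> fin_cases p' <;> fin_cases c <;> fin_cases d <;> decide
  exact h p p' c d hp hc1 hc2 hd1 hd2

lemma snoc_fun_inj (p : Fin 3) :
    Function.Injective (fun t : Fin m → Fin 3 => (Fin.snoc t p : Fin (m+1) → Fin 3)) :=
  fun a b h => (snoc_inj h).1

lemma neighborFinset_snoc_of_not_const (hm : 0 < m) (p : Fin 3) {s : Fin m → Fin 3}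
    (hs : ∀ q, s ≠ corner m q) :
    (hanoi (m+1)).neighborFinset (Fin.snoc s p) =
      ((hanoi m).neighborFinset s).image (fun t => Fin.snoc t p) := by
  ext u
  simp only [mem_neighborFinset, mem_image]
  rw [adj_snoc_iff]
  constructor
  · rintro (⟨t, ht, rfl⟩ | ⟨p', hp', hall, rfl⟩)
    · exact ⟨t, ht, rfl⟩
    · exfalso
      apply hs (s ⟨0, hm⟩)
      funext j
      exact all_eq_third hp' (hall j).1 (hall j).2 (hall ⟨0, hm⟩).1 (hall ⟨0, hm⟩).2
  · rintro ⟨t, ht, rfl⟩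
    exact Or.inl ⟨t, ht, rfl⟩

lemma neighborFinset_snoc_self (hm : 0 < m) (p : Fin 3) :
    (hanoi (m+1)).neighborFinset (Fin.snoc (corner m p) p) =
      ((hanoi m).neighborFinset (corner m p)).image (fun t => Fin.snoc t p) := by
  ext u
  simp only [mem_neighborFinset, mem_image]
  rw [adj_snoc_iff]
  constructor
  · rintro (⟨t, ht, rfl⟩ | ⟨p', hp', hall, rfl⟩)
    · exact ⟨t, ht, rfl⟩
    · exact absurd rfl (hall ⟨0, hm⟩).1
  · rintro ⟨t, ht, rfl⟩
    exact Or.inl ⟨t, ht, rfl⟩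

lemma third_unique {p q p' r : Fin 3} (h1 : p' ≠ p) (h2 : p' ≠ q) (h3 : r ≠ p) (h4 : r ≠ q)
    (h5 : q ≠ p) : p' = r := by
  have h : ∀ p q p' r : Fin 3, p' ≠ p → p' ≠ q → r ≠ p → r ≠ q → q ≠ p → p' = r := by
    intro p q p' r
    fin_cases p <;> fin_cases q <;> fin_cases p' <;> fin_cases r <;> decide
  exact h p q p' r h1 h2 h3 h4 h5

lemma neighborFinset_snoc_corner (hm : 0 < m) {p q r : Fin 3} (hqp : q ≠ p) (hrp : r ≠ p)
    (hrq : r ≠ q) :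
    (hanoi (m+1)).neighborFinset (Fin.snoc (corner m q) p) =
      insert (Fin.snoc (corner m q) r)
        (((hanoi m).neighborFinset (corner m q)).image (fun t => Fin.snoc t p)) := by
  classical
  ext u
  simp only [mem_neighborFinset, mem_image, Finset.mem_insert]
  rw [adj_snoc_iff]
  constructor
  · rintro (⟨t, ht, rfl⟩ | ⟨p', hp', hall, rfl⟩)
    · exact Or.inr ⟨t, ht, rfl⟩
    · left
      have hp'q : p' ≠ q := fun h => (hall ⟨0, hm⟩).2 h.symm
      rw [third_unique hp' hp'q hrp hrq hqp]
  · rintro (rfl | ⟨t, ht, rfl⟩)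
    · exact Or.inr ⟨r, hrp, fun j => ⟨hqp, fun h => hrq h.symm⟩, rfl⟩
    · exact Or.inl ⟨t, ht, rfl⟩

lemma snoc_notmem_image (p r : Fin 3) (hrp : r ≠ p) (s : Fin m → Fin 3) (F : Finset (Fin m → Fin 3)) :
    (Fin.snoc s r : Fin (m+1) → Fin 3) ∉ F.image (fun t => Fin.snoc t p) := by
  intro h
  simp only [mem_image] at h
  obtain ⟨t, _, ht⟩ := h
  exact hrp ((snoc_inj ht.symm).2)

lemma sum_sum_nbr {V : Type*} [Fintype V] [DecidableEq V] (G : SimpleGraph V)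
    [DecidableRel G.Adj] (f : V → ℝ) :
    ∑ t, ∑ u ∈ G.neighborFinset t, f u = ∑ u, (G.degree u : ℝ) * f u := by
  have h1 : ∀ t, ∑ u ∈ G.neighborFinset t, f u = ∑ u, if G.Adj t u then f u else 0 := by
    intro t
    rw [neighborFinset_eq_filter, Finset.sum_filter]
  simp only [h1]
  rw [Finset.sum_comm]
  refine Finset.sum_congr rfl fun u _ => ?_
  have h2 : ∀ t, G.Adj t u ↔ G.Adj u t := fun t => adj_comm G t u
  calc ∑ t, (if G.Adj t u then f u else 0)
      = ∑ t ∈ Finset.univ.filter (fun t => G.Adj u t), f u := by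
        rw [Finset.sum_filter]
        exact Finset.sum_congr rfl fun t _ => by rw [if_congr (h2 t) rfl rfl]
    _ = (Finset.univ.filter (fun t => G.Adj u t)).card • f u := Finset.sum_const _
    _ = (G.degree u : ℝ) * f u := by
        rw [← card_neighborFinset_eq_degree, neighborFinset_eq_filter, nsmul_eq_mul]

lemma green {V : Type*} [Fintype V] [DecidableEq V] (G : SimpleGraph V)
    [DecidableRel G.Adj] (C : Finset V) (g : V → ℝ)
    (hh : ∀ v ∉ C, (G.degree v : ℝ) * g v = ∑ u ∈ G.neighborFinset v, g u) :
    ∑ v ∈ C, ((G.degree v : ℝ) * g v - ∑ u ∈ G.neighborFinset v, g u) = 0 := by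
  have h2 : ∑ v, ((G.degree v : ℝ) * g v - ∑ u ∈ G.neighborFinset v, g u) = 0 := by
    rw [Finset.sum_sub_distrib, sum_sum_nbr]
    ring
  rw [Finset.sum_subset (Finset.subset_univ C) (fun v _ hv => by rw [hh v hv]; ring), h2]



lemma maxp {V : Type*} [Fintype V] [DecidableEq V] (G : SimpleGraph V) [DecidableRel G.Adj]
    (hconn : G.Preconnected) (C : V → Prop) (g : V → ℝ)
    (h0 : ∀ v, C v → g v = 0)
    (hh : ∀ v, ¬ C v → (G.degree v : ℝ) * g v = ∑ u ∈ G.neighborFinset v, g u)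
    (c : V) (hc : C c) : ∀ v, g v ≤ 0 := by
  classical
  have : Nonempty V := ⟨c⟩
  obtain ⟨x, hx⟩ := Finite.exists_max g
  suffices hx0 : g x ≤ 0 by exact fun v => (hx v).trans hx0
  obtain ⟨w⟩ := hconn x c
  have key : ∀ (a e : V) (w : G.Walk a e), C e → g a = g x → g x ≤ 0 := by
    intro a e w
    induction w with
    | nil =>
      intro hce ha
      rw [← ha, h0 _ hce]
    | @cons a b e h w ih =>
      intro hce ha
      by_cases hCa : C a
      · rw [← ha, h0 _ hCa]
      · have hdeg := hh _ hCa
        have hzero : ∑ u ∈ G.neighborFinset a, (g x - g u) = 0 := by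
          rw [Finset.sum_sub_distrib, Finset.sum_const, ← hdeg, ha,
            card_neighborFinset_eq_degree, nsmul_eq_mul]
          ring
        have hterm := (Finset.sum_eq_zero_iff_of_nonneg
          (fun u _ => sub_nonneg.2 (hx u))).1 hzero
        have hb : g x - g b = 0 := hterm b (by rw [mem_neighborFinset]; exact h)
        exact ih hce (by linarith)
  exact key x c w hc rfl

lemma unique_solution {V : Type*} [Fintype V] [DecidableEq V] (G : SimpleGraph V)
    [DecidableRel G.Adj] (hconn : G.Preconnected) (hdeg : ∀ v, 0 < G.degree v)
    (C : V → Prop) (h1 h2 : V → ℝ)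
    (h1c : ∀ v, C v → h1 v = 0) (h2c : ∀ v, C v → h2 v = 0)
    (h1r : ∀ v, ¬ C v →
      h1 v = 1 + (1 / (G.degree v : ℝ)) * ∑ u ∈ G.neighborFinset v, h1 u)
    (h2r : ∀ v, ¬ C v →
      h2 v = 1 + (1 / (G.degree v : ℝ)) * ∑ u ∈ G.neighborFinset v, h2 u)
    (c : V) (hc : C c) : h1 = h2 := by
  classical
  have key : ∀ v, ¬ C v →
      (G.degree v : ℝ) * (h1 v - h2 v) = ∑ u ∈ G.neighborFinset v, (h1 u - h2 u) := by
    intro v hv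
    have d0 : ((G.degree v : ℝ)) ≠ 0 := Nat.cast_ne_zero.2 (hdeg v).ne'
    have e1 : (G.degree v : ℝ) * h1 v = (G.degree v : ℝ) + ∑ u ∈ G.neighborFinset v, h1 u := by
      rw [h1r v hv]; field_simp
    have e2 : (G.degree v : ℝ) * h2 v = (G.degree v : ℝ) + ∑ u ∈ G.neighborFinset v, h2 u := by
      rw [h2r v hv]; field_simp
    rw [Finset.sum_sub_distrib, mul_sub, e1, e2]
    ring
  have le1 := maxp G hconn C (fun v => h1 v - h2 v)
    (fun v hv => by show h1 v - h2 v = 0; rw [h1c v hv, h2c v hv]; ring) key c hc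
  have le2 := maxp G hconn C (fun v => h2 v - h1 v)
    (fun v hv => by show h2 v - h1 v = 0; rw [h1c v hv, h2c v hv]; ring)
    (fun v hv => by
      show (G.degree v : ℝ) * (h2 v - h1 v) = ∑ u ∈ G.neighborFinset v, (h2 u - h1 u)
      have hk := key v hv
      have e : ∑ u ∈ G.neighborFinset v, (h2 u - h1 u)
          = - ∑ u ∈ G.neighborFinset v, (h1 u - h2 u) := by
        rw [← Finset.sum_neg_distrib]
        exact Finset.sum_congr rfl fun u _ => by ring
      rw [e, ← hk]; ring) c hc
  funext v
  have l1 : h1 v - h2 v ≤ 0 := le1 v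
  have l2 : h2 v - h1 v ≤ 0 := le2 v
  linarith

lemma corner_not_eq (hm : 0 < m) {p q : Fin 3} (h : p ≠ q) : corner m p ≠ corner m q :=
  fun he => h (congrFun he ⟨0, hm⟩)

/-- symmetry of any solution under peg permutations -/
lemma sym_of_solution (hm : 0 < m) (h : (Fin m → Fin 3) → ℝ)
    (hc : ∀ p, h (corner m p) = 0)
    (hr : ∀ s, (∀ p : Fin 3, s ≠ corner m p) →
      h s = 1 + (1 / ((hanoi m).degree s : ℝ)) * ∑ t ∈ (hanoi m).neighborFinset s, h t)
    (σ : Equiv.Perm (Fin 3)) (s : Fin m → Fin 3) : h (⇑σ ∘ s) = h s := by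
  classical
  set C : (Fin m → Fin 3) → Prop := fun s => ∃ p, s = corner m p with hC
  have hnotC : ∀ s, ¬ C s → (∀ p : Fin 3, s ≠ corner m p) := by
    intro s hs p hp
    exact hs ⟨p, hp⟩
  have h'c : ∀ v, C v → h (⇑σ ∘ v) = 0 := by
    rintro v ⟨p, rfl⟩
    rw [corner_comp]
    exact hc (σ p)
  have h'r : ∀ v, ¬ C v →
      h (⇑σ ∘ v) = 1 + (1 / ((hanoi m).degree v : ℝ)) *
        ∑ u ∈ (hanoi m).neighborFinset v, h (⇑σ ∘ u) := by
    intro v hv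
    have hσv : ∀ p : Fin 3, ⇑σ ∘ v ≠ corner m p := by
      intro p hp
      apply hv
      refine ⟨σ⁻¹ p, ?_⟩
      have := congrArg (fun t => ⇑σ⁻¹ ∘ t) hp
      rw [comp_inv_comp] at this
      rw [this, corner_comp]
    have := hr _ hσv
    rwa [degree_comp, sum_nbr_comp] at this
  have := unique_solution (hanoi m) (hanoi_preconnected m) (degree_pos hm) C
    (fun v => h (⇑σ ∘ v)) h
    h'c (by rintro v ⟨p, rfl⟩; exact hc p)
    h'r (fun v hv => hr v (hnotC v hv))
    (corner m 0) ⟨0, rfl⟩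
  exact congrFun this s



lemma degree_snoc_of_not_const (hm : 0 < m) (p : Fin 3) {s : Fin m → Fin 3}
    (hs : ∀ q, s ≠ corner m q) :
    (hanoi (m+1)).degree (Fin.snoc s p) = (hanoi m).degree s := by
  classical
  rw [← card_neighborFinset_eq_degree, neighborFinset_snoc_of_not_const hm p hs,
    Finset.card_image_of_injective _ (snoc_fun_inj p), card_neighborFinset_eq_degree]

theorem aux (m : ℕ) (hm : 0 < m)
    (hbig : (Fin (m+1) → Fin 3) → ℝ) (hsmall : (Fin m → Fin 3) → ℝ)
    (hbigcorner : ∀ p : Fin 3, hbig (corner (m+1) p) = 0)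
    (hbigrec : ∀ s, (∀ p : Fin 3, s ≠ corner (m+1) p) →
      hbig s = 1 + (1 / ((hanoi (m+1)).degree s : ℝ)) *
        ∑ t ∈ (hanoi (m+1)).neighborFinset s, hbig t)
    (hsmallcorner : ∀ p : Fin 3, hsmall (corner m p) = 0)
    (hsmallrec : ∀ s, (∀ p : Fin 3, s ≠ corner m p) →
      hsmall s = 1 + (1 / ((hanoi m).degree s : ℝ)) *
        ∑ t ∈ (hanoi m).neighborFinset s, hsmall t) :
    1 + (1 / 2 : ℝ) * ∑ t ∈ (hanoi (m+1)).neighborFinset (corner (m+1) 0), hbig t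
      = 3 * (1 + (1 / 2 : ℝ) *
          ∑ t ∈ (hanoi m).neighborFinset (corner m 0), hsmall t) + 1 := by
  classical
  have hS : ∀ (σ : Equiv.Perm (Fin 3)) s, hsmall (⇑σ ∘ s) = hsmall s :=
    sym_of_solution hm hsmall hsmallcorner hsmallrec
  have hB : ∀ (σ : Equiv.Perm (Fin 3)) s, hbig (⇑σ ∘ s) = hbig s :=
    sym_of_solution (Nat.succ_pos m) hbig hbigcorner hbigrec
  set d : (Fin m → Fin 3) → ℝ := fun t => hbig (Fin.snoc t 0) - hsmall t with hdDef
  set S : ℝ := ∑ t ∈ (hanoi m).neighborFinset (corner m 0), hsmall t with hSDef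
  set x : ℝ := hbig (Fin.snoc (corner m 1) 0) with hxDef
  -- symmetric values of hbig at bridge states
  have z1 : hbig (Fin.snoc (corner m 1) 2) = x := by
    have h := hB (Equiv.swap 0 2) (Fin.snoc (corner m 1) 0)
    rw [snoc_comp, corner_comp] at h
    have e1 : (Equiv.swap (0 : Fin 3) 2) 1 = 1 := by decide
    have e2 : (Equiv.swap (0 : Fin 3) 2) 0 = 2 := by decide
    rw [e1, e2] at h
    exact h
  have z2 : hbig (Fin.snoc (corner m 2) 0) = x := by
    have h := hB (Equiv.swap 1 2) (Fin.snoc (corner m 1) 0)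
    rw [snoc_comp, corner_comp] at h
    have e1 : (Equiv.swap (1 : Fin 3) 2) 1 = 2 := by decide
    have e2 : (Equiv.swap (1 : Fin 3) 2) 0 = 0 := by decide
    rw [e1, e2] at h
    exact h
  have z3 : hbig (Fin.snoc (corner m 2) 1) = x := by
    have h := hB (Equiv.swap 1 2) (Fin.snoc (corner m 1) 2)
    rw [snoc_comp, corner_comp] at h
    have e1 : (Equiv.swap (1 : Fin 3) 2) 1 = 2 := by decide
    have e2 : (Equiv.swap (1 : Fin 3) 2) 2 = 1 := by decide
    rw [e1, e2] at h
    rw [h, z1]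
  -- sums of hsmall over corner neighborhoods are all S
  have hSq : ∀ q : Fin 3, ∑ t ∈ (hanoi m).neighborFinset (corner m q), hsmall t = S := by
    intro q
    have h := sum_nbr_comp (Equiv.swap 0 q) (corner m 0) hsmall
    rw [corner_comp, Equiv.swap_apply_left] at h
    rw [h]
    exact Finset.sum_congr rfl fun t _ => hS _ t
  -- boundary values of d
  have hd0 : d (corner m 0) = 0 := by
    simp only [hdDef]
    rw [← corner_succ, hbigcorner, hsmallcorner]
    ring
  have hd1 : d (corner m 1) = x := by
    simp only [hdDef]
    rw [hsmallcorner]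
    ring
  have hd2 : d (corner m 2) = x := by
    simp only [hdDef]
    rw [hsmallcorner, z2]
    ring
  -- harmonicity of d off corners
  have harm : ∀ t, (∀ p : Fin 3, t ≠ corner m p) →
      ((hanoi m).degree t : ℝ) * d t = ∑ u ∈ (hanoi m).neighborFinset t, d u := by
    intro t ht
    have hnc : ∀ p : Fin 3, Fin.snoc t 0 ≠ corner (m+1) p := by
      intro p hp
      rw [corner_succ] at hp
      obtain ⟨h1, h2⟩ := snoc_inj hp
      exact ht p h1
    have e1 := hbigrec (Fin.snoc t 0) hnc
    rw [degree_snoc_of_not_const hm 0 ht, neighborFinset_snoc_of_not_const hm 0 ht,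
      Finset.sum_image (fun a _ b _ h => snoc_fun_inj 0 h)] at e1
    have e2 := hsmallrec t ht
    have dne : ((hanoi m).degree t : ℝ) ≠ 0 := Nat.cast_ne_zero.2 (degree_pos hm t).ne'
    have E1 : ((hanoi m).degree t : ℝ) * hbig (Fin.snoc t 0)
        = ((hanoi m).degree t : ℝ) + ∑ u ∈ (hanoi m).neighborFinset t, hbig (Fin.snoc u 0) := by
      rw [e1]; field_simp
    have E2 : ((hanoi m).degree t : ℝ) * hsmall t
        = ((hanoi m).degree t : ℝ) + ∑ u ∈ (hanoi m).neighborFinset t, hsmall u := by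
      rw [e2]; field_simp
    simp only [hdDef]
    rw [Finset.sum_sub_distrib, mul_sub, E1, E2]
    ring
  set A0 : ℝ := ∑ u ∈ (hanoi m).neighborFinset (corner m 0), d u with hA0
  set A1 : ℝ := ∑ u ∈ (hanoi m).neighborFinset (corner m 1), d u with hA1
  set A2 : ℝ := ∑ u ∈ (hanoi m).neighborFinset (corner m 2), d u with hA2
  -- Green identity
  have green0 : A0 + A1 + A2 = 4 * x := by
    set CF : Finset (Fin m → Fin 3) := {corner m 0, corner m 1, corner m 2} with hCF
    have hout : ∀ v ∉ CF, ((hanoi m).degree v : ℝ) * d v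
        = ∑ u ∈ (hanoi m).neighborFinset v, d u := by
      intro v hv
      refine harm v fun p hp => hv ?_
      have hp3 : p = 0 ∨ p = 1 ∨ p = 2 := by fin_cases p <;> simp
      rcases hp3 with rfl | rfl | rfl <;>
        simp [hCF, Finset.mem_insert, Finset.mem_singleton, hp]
    have hg := green (hanoi m) CF d hout
    have hne01 : corner m 0 ≠ corner m 1 := corner_not_eq hm (by decide)
    have hne02 : corner m 0 ≠ corner m 2 := corner_not_eq hm (by decide)
    have hne12 : corner m 1 ≠ corner m 2 := corner_not_eq hm (by decide)
    rw [hCF, Finset.sum_insert (by simp [hne01, hne02]),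
      Finset.sum_insert (by simp [hne12]), Finset.sum_singleton] at hg
    rw [degree_corner hm, degree_corner hm, degree_corner hm, hd0, hd1, hd2] at hg
    push_cast at hg
    linarith
  -- bridge equations
  have bridge : ∀ q r : Fin 3, q ≠ 0 → r ≠ 0 → r ≠ q →
      hbig (Fin.snoc (corner m q) 0) = 1 + (1/3 : ℝ) *
        (hbig (Fin.snoc (corner m q) r)
          + (∑ t ∈ (hanoi m).neighborFinset (corner m q), hsmall t
             + ∑ u ∈ (hanoi m).neighborFinset (corner m q), d u)) := by
    intro q r hq0 hr0 hrq
    have hnc : ∀ p : Fin 3, Fin.snoc (corner m q) 0 ≠ corner (m+1) p := by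
      intro p hp
      rw [corner_succ] at hp
      obtain ⟨h1, h2⟩ := snoc_inj hp
      rw [← h2] at h1
      exact corner_not_eq hm hq0 h1
    have e := hbigrec (Fin.snoc (corner m q) 0) hnc
    have hnbr := neighborFinset_snoc_corner hm hq0 hr0 hrq
    have hnotmem := snoc_notmem_image 0 r hr0 (corner m q) ((hanoi m).neighborFinset (corner m q))
    have hdeg3 : (hanoi (m+1)).degree (Fin.snoc (corner m q) 0) = 3 := by
      rw [← card_neighborFinset_eq_degree, hnbr, Finset.card_insert_of_notMem hnotmem,
        Finset.card_image_of_injective _ (snoc_fun_inj 0),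
        card_neighborFinset_eq_degree, degree_corner hm]
    rw [hdeg3, hnbr, Finset.sum_insert hnotmem,
      Finset.sum_image (fun a _ b _ h => snoc_fun_inj 0 h)] at e
    have hsplit : ∑ t ∈ (hanoi m).neighborFinset (corner m q), hbig (Fin.snoc t 0)
        = ∑ t ∈ (hanoi m).neighborFinset (corner m q), hsmall t
          + ∑ u ∈ (hanoi m).neighborFinset (corner m q), d u := by
      rw [← Finset.sum_add_distrib]
      refine Finset.sum_congr rfl fun t _ => ?_
      simp only [hdDef]
      ring
    rw [hsplit] at e
    exact_mod_cast e
  have br1 := bridge 1 2 (by decide) (by decide) (by decide)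
  have br2 := bridge 2 1 (by decide) (by decide) (by decide)
  rw [z1, hSq 1, ← hA1] at br1
  rw [z3, z2, hSq 2, ← hA2] at br2
  -- goal neighborhood sum
  have hgoal : ∑ t ∈ (hanoi (m+1)).neighborFinset (corner (m+1) 0), hbig t = S + A0 := by
    rw [corner_succ, neighborFinset_snoc_self hm 0,
      Finset.sum_image (fun a _ b _ h => snoc_fun_inj 0 h)]
    rw [hSDef, hA0, ← Finset.sum_add_distrib]
    refine Finset.sum_congr rfl fun t _ => ?_
    simp only [hdDef]
    ring
  rw [hgoal]
  have hx1 : x = hbig (Fin.snoc (corner m 1) 0) := hxDef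
  rw [← hx1] at br1
  linarith

end HG

/-- the recurrence `E_{1→a}(n) = 3·E_{1→a}(n−1) + 1`. -/
theorem hanoi_one_to_any_recurrence (n : ℕ) (hn : 2 ≤ n)
    (hbig : (Fin n → Fin 3) → ℝ) (hsmall : (Fin (n - 1) → Fin 3) → ℝ)
    (hbigcorner : ∀ p : Fin 3, hbig (corner n p) = 0)
    (hbigrec : ∀ s, (∀ p : Fin 3, s ≠ corner n p) →
      hbig s = 1 + (1 / ((hanoi n).degree s : ℝ)) * ∑ t ∈ (hanoi n).neighborFinset s, hbig t)
    (hsmallcorner : ∀ p : Fin 3, hsmall (corner (n - 1) p) = 0)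
    (hsmallrec : ∀ s, (∀ p : Fin 3, s ≠ corner (n - 1) p) →
      hsmall s = 1 + (1 / ((hanoi (n - 1)).degree s : ℝ)) *
        ∑ t ∈ (hanoi (n - 1)).neighborFinset s, hsmall t) :
    1 + (1 / 2 : ℝ) * ∑ t ∈ (hanoi n).neighborFinset (corner n 0), hbig t
      = 3 * (1 + (1 / 2 : ℝ) *
          ∑ t ∈ (hanoi (n - 1)).neighborFinset (corner (n - 1) 0), hsmall t) + 1 := by
  obtain ⟨m, rfl⟩ : ∃ m, n = m + 1 := ⟨n - 1, by omega⟩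
  have hm : 0 < m := by omega
  exact HG.aux m hm hbig hsmall hbigcorner hbigrec hsmallcorner hsmallrec
end

section
/- (Mean Commute Theorem.) Let G be a finite connected simple graph with m edges, and let v, w be vertices of G. Suppose h₁ : V(G) → ℝ satisfies h₁(w) = 0 and h₁(s) = 1 + (1/deg s)·Σ_{t adjacent to s} h₁(t) for every s ≠ w; suppose h₂ : V(G) → ℝ satisfies h₂(v) = 0 and h₂(s) = 1 + (1/deg s)·Σ_{t adjacent to s} h₂(t) for every s ≠ v; and suppose φ : V(G) → ℝ satisfies Σ_{t adjacent to s} (φ(s) − φ(t)) = 0 for every s ∉ {v, w} and Σ_{t adjacent to v} (φ(v) − φ(t)) = 1. Then h₁(v) + h₂(w) = 2·m·(φ(v) − φ(w)). -/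
open Finset


lemma lap_total {V : Type*} [Fintype V] (G : SimpleGraph V) [DecidableRel G.Adj]
    (g : V → ℝ) : ∑ s, ∑ t ∈ G.neighborFinset s, (g s - g t) = 0 := by
  have h := Finset.sum_comm' (s := (Finset.univ : Finset V))
    (t := fun s => G.neighborFinset s) (t' := Finset.univ)
    (s' := fun t => G.neighborFinset t) (f := fun s t => g s - g t)
    (by intro x y; simp [SimpleGraph.mem_neighborFinset, G.adj_comm])
  have h2 : ∑ y, ∑ x ∈ G.neighborFinset y, (g x - g y)
      = - ∑ s, ∑ t ∈ G.neighborFinset s, (g s - g t) := by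
    rw [← Finset.sum_neg_distrib]
    refine Finset.sum_congr rfl fun y _ => ?_
    rw [← Finset.sum_neg_distrib]
    exact Finset.sum_congr rfl fun x _ => by ring
  rw [h2] at h
  linarith

lemma harmonic_const {V : Type*} [Fintype V] [DecidableEq V] (G : SimpleGraph V)
    [DecidableRel G.Adj] (hconn : G.Connected) (g : V → ℝ)
    (hg : ∀ s, ∑ t ∈ G.neighborFinset s, (g s - g t) = 0) : ∀ a b, g a = g b := by
  have hA : ∑ s, ∑ t ∈ G.neighborFinset s, (g s - g t) * g s = 0 := by
    refine Finset.sum_eq_zero fun s _ => ?_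
    rw [← Finset.sum_mul, hg s, zero_mul]
  have hB : ∑ s, ∑ t ∈ G.neighborFinset s, (g s - g t) * g t = 0 := by
    have h := Finset.sum_comm' (s := (Finset.univ : Finset V))
      (t := fun s => G.neighborFinset s) (t' := Finset.univ)
      (s' := fun t => G.neighborFinset t) (f := fun s t => (g s - g t) * g t)
      (by intro x y; simp [SimpleGraph.mem_neighborFinset, G.adj_comm])
    rw [h]
    have : ∑ y, ∑ x ∈ G.neighborFinset y, (g x - g y) * g y
        = - ∑ s, ∑ t ∈ G.neighborFinset s, (g s - g t) * g s := by
      rw [← Finset.sum_neg_distrib]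
      refine Finset.sum_congr rfl fun y _ => ?_
      rw [← Finset.sum_neg_distrib]
      exact Finset.sum_congr rfl fun x _ => by ring
    rw [this, hA, neg_zero]
  have key : ∑ s, ∑ t ∈ G.neighborFinset s, (g s - g t) ^ 2 = 0 := by
    have : ∀ s t : V, (g s - g t) ^ 2 = (g s - g t) * g s - (g s - g t) * g t := by
      intro s t; ring
    simp_rw [this, Finset.sum_sub_distrib]
    rw [hA, hB, sub_zero]
  have hadj : ∀ s t, G.Adj s t → g s = g t := by
    intro s t hst
    have h1 := (Finset.sum_eq_zero_iff_of_nonneg (fun s _ =>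
      Finset.sum_nonneg fun t _ => sq_nonneg (g s - g t))).mp key s (mem_univ s)
    have h2 := (Finset.sum_eq_zero_iff_of_nonneg (fun t _ => sq_nonneg (g s - g t))).mp
      h1 t (by simpa [SimpleGraph.mem_neighborFinset] using hst)
    have := sq_eq_zero_iff.mp h2
    linarith
  intro a b
  obtain ⟨p⟩ := hconn.preconnected a b
  induction p with
  | nil => rfl
  | cons h p ih => rw [hadj _ _ h]; exact ih

/-- Mean Commute Theorem: the mean commute time between `v` and `w` in a
finite connected simple graph with `m` edges equals `2·m·R_vw`, where `R_vw` is the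
effective resistance between `v` and `w` with a 1-ohm resistor on every edge. -/
theorem mean_commute_theorem {V : Type*} [Fintype V] [DecidableEq V]
    (G : SimpleGraph V) [DecidableRel G.Adj] (hconn : G.Connected) (v w : V)
    (h₁ h₂ φ : V → ℝ)
    (h₁w : h₁ w = 0)
    (h₁rec : ∀ s, s ≠ w →
      h₁ s = 1 + (1 / (G.degree s : ℝ)) * ∑ t ∈ G.neighborFinset s, h₁ t)
    (h₂v : h₂ v = 0)
    (h₂rec : ∀ s, s ≠ v →
      h₂ s = 1 + (1 / (G.degree s : ℝ)) * ∑ t ∈ G.neighborFinset s, h₂ t)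
    (hφ : ∀ s, s ≠ v → s ≠ w → ∑ t ∈ G.neighborFinset s, (φ s - φ t) = 0)
    (hφv : ∑ t ∈ G.neighborFinset v, (φ v - φ t) = 1) :
    h₁ v + h₂ w = 2 * (G.edgeFinset.card : ℝ) * (φ v - φ w) := by
  set m : ℝ := (G.edgeFinset.card : ℝ) with hm_def
  -- v ≠ w
  have hvw : v ≠ w := by
    rintro rfl
    have htot := lap_total G φ
    rw [← Finset.add_sum_erase _ _ (mem_univ v)] at htot
    have hrest : ∑ s ∈ univ.erase v, ∑ t ∈ G.neighborFinset s, (φ s - φ t) = 0 :=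
      Finset.sum_eq_zero fun s hs => hφ s (Finset.ne_of_mem_erase hs)
        (Finset.ne_of_mem_erase hs)
    rw [hφv, hrest] at htot
    norm_num at htot
  -- every vertex has a neighbor
  have hNv : ∃ t, G.Adj v t := by
    by_contra h
    push_neg at h
    have : G.neighborFinset v = ∅ := by
      ext t; simp [SimpleGraph.mem_neighborFinset, h t]
    rw [this] at hφv
    simp at hφv
  have hadj : ∀ s, ∃ t, G.Adj s t := by
    intro s
    by_cases hs : s = v
    · exact hs ▸ hNv
    · obtain ⟨p⟩ := hconn.preconnected s v
      cases p with
      | nil => exact absurd rfl hs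
      | cons h _ => exact ⟨_, h⟩
  have hdeg : ∀ s, (0 : ℝ) < G.degree s := by
    intro s
    exact_mod_cast G.degree_pos_iff_exists_adj s |>.mpr (hadj s)
  have hm : ∑ s, (G.degree s : ℝ) = 2 * m := by
    rw [hm_def]
    exact_mod_cast congrArg (Nat.cast : ℕ → ℝ) (G.sum_degrees_eq_twice_card_edges)
  -- Laplacian from the recurrence
  have lapRec : ∀ (h : V → ℝ) (s : V),
      h s = 1 + (1 / (G.degree s : ℝ)) * ∑ t ∈ G.neighborFinset s, h t →
      ∑ t ∈ G.neighborFinset s, (h s - h t) = (G.degree s : ℝ) := by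
    intro h s hrec
    have hd : (G.degree s : ℝ) ≠ 0 := ne_of_gt (hdeg s)
    have hsum : ∑ t ∈ G.neighborFinset s, h t = (G.degree s : ℝ) * (h s - 1) := by
      field_simp at hrec
      linarith
    rw [Finset.sum_sub_distrib, Finset.sum_const, G.card_neighborFinset_eq_degree,
      nsmul_eq_mul, hsum]
    ring
  -- Laplacian at the exceptional vertex
  have lapAt : ∀ (h : V → ℝ) (u : V),
      (∀ s, s ≠ u → ∑ t ∈ G.neighborFinset s, (h s - h t) = (G.degree s : ℝ)) →
      ∑ t ∈ G.neighborFinset u, (h u - h t) = (G.degree u : ℝ) - 2 * m := by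
    intro h u hrest
    have htot := lap_total G h
    rw [← Finset.add_sum_erase _ _ (mem_univ u)] at htot
    have h1 : ∑ s ∈ univ.erase u, ∑ t ∈ G.neighborFinset s, (h s - h t)
        = ∑ s ∈ univ.erase u, (G.degree s : ℝ) :=
      Finset.sum_congr rfl fun s hs => hrest s (Finset.ne_of_mem_erase hs)
    have h2 : (G.degree u : ℝ) + ∑ s ∈ univ.erase u, (G.degree s : ℝ)
        = ∑ s, (G.degree s : ℝ) :=
      Finset.add_sum_erase univ (fun s => (G.degree s : ℝ)) (mem_univ u)
    rw [h1] at htot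
    rw [hm] at h2
    linarith
  -- Laplacian of φ at w
  have hφw : ∑ t ∈ G.neighborFinset w, (φ w - φ t) = -1 := by
    have htot := lap_total G φ
    rw [← Finset.add_sum_erase _ _ (mem_univ v)] at htot
    rw [← Finset.add_sum_erase _ _ (Finset.mem_erase.mpr ⟨Ne.symm hvw, mem_univ w⟩)]
      at htot
    have hrest : ∑ s ∈ (univ.erase v).erase w, ∑ t ∈ G.neighborFinset s, (φ s - φ t)
        = 0 := Finset.sum_eq_zero fun s hs => by
      have h1 := Finset.mem_erase.mp hs
      have h2 := Finset.mem_erase.mp h1.2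
      exact hφ s h2.1 h1.1
    rw [hφv, hrest] at htot
    linarith
  -- the harmonic combination
  set g : V → ℝ := fun s => h₁ s - h₂ s - 2 * m * φ s with hg_def
  have hlap₁ : ∀ s, s ≠ w →
      ∑ t ∈ G.neighborFinset s, (h₁ s - h₁ t) = (G.degree s : ℝ) :=
    fun s hs => lapRec h₁ s (h₁rec s hs)
  have hlap₂ : ∀ s, s ≠ v →
      ∑ t ∈ G.neighborFinset s, (h₂ s - h₂ t) = (G.degree s : ℝ) :=
    fun s hs => lapRec h₂ s (h₂rec s hs)
  have hlap₁w := lapAt h₁ w hlap₁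
  have hlap₂v := lapAt h₂ v hlap₂
  have hg : ∀ s, ∑ t ∈ G.neighborFinset s, (g s - g t) = 0 := by
    intro s
    have hsplit : ∑ t ∈ G.neighborFinset s, (g s - g t)
        = (∑ t ∈ G.neighborFinset s, (h₁ s - h₁ t))
          - (∑ t ∈ G.neighborFinset s, (h₂ s - h₂ t))
          - 2 * m * ∑ t ∈ G.neighborFinset s, (φ s - φ t) := by
      rw [← Finset.sum_sub_distrib, Finset.mul_sum, ← Finset.sum_sub_distrib]
      exact Finset.sum_congr rfl fun t _ => by rw [hg_def]; ring
    rw [hsplit]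
    by_cases hsv : s = v
    · subst hsv
      rw [hlap₁ s hvw, hlap₂v, hφv]
      ring
    · by_cases hsw : s = w
      · subst hsw
        rw [hlap₁w, hlap₂ s (Ne.symm hvw), hφw]
        ring
      · rw [hlap₁ s hsw, hlap₂ s hsv, hφ s hsv hsw]
        ring
  have hc := harmonic_const G hconn g hg v w
  rw [hg_def] at hc
  simp only at hc
  rw [h₁w, h₂v] at hc
  linarith
end

section
/- For every n ≥ 1, the number of edges of the Hanoi graph H_n equals 3·(3^n − 1)/2. -/
open Function Finset

lemma fin3_cover (a b c d : Fin 3) (hab : a ≠ b) (hac : a ≠ c) (hbc : b ≠ c) :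
    d = a ∨ d = b ∨ d = c := by revert hab hac hbc; revert a b c d; decide

lemma fin3_unique (x y d e : Fin 3) (hxy : x ≠ y) (hdx : d ≠ x) (hdy : d ≠ y)
    (hex : e ≠ x) (hey : e ≠ y) : d = e := by
  revert hxy hdx hdy hex hey; revert x y d e; decide

lemma neigh_const {n : ℕ} (hn : 1 ≤ n) (s : Fin n → Fin 3)
    (hs : ∀ j, s j = s ⟨0, hn⟩) :
    (hanoi n).neighborFinset s
      = ({s ⟨0, hn⟩}ᶜ : Finset (Fin 3)).image (fun p => Function.update s ⟨0, hn⟩ p) := by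
  set z : Fin n := ⟨0, hn⟩ with hz
  ext t
  simp only [SimpleGraph.mem_neighborFinset, Finset.mem_image, Finset.mem_compl,
    Finset.mem_singleton]
  constructor
  · rintro ⟨k, h1, h2, h3⟩
    have hkz : k = z := by
      by_contra hk
      have hzk : z < k := by
        refine lt_of_le_of_ne (by simp [hz, Fin.le_def]) (Ne.symm hk)
      exact (h3 z hzk).1 (hs k).symm
    subst hkz
    refine ⟨t z, fun h => h2 h.symm, ?_⟩
    funext j
    rcases eq_or_ne j z with rfl | hj
    · simp
    · rw [Function.update_of_ne hj]
      exact h1 j hj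
  · rintro ⟨p, hp, rfl⟩
    refine ⟨z, fun j hj => (Function.update_of_ne hj _ _).symm, by simp [Ne.symm hp], ?_⟩
    intro j hj
    exact absurd hj (by simp [hz, Fin.lt_def])

lemma neigh_nonconst {n : ℕ} (hn : 1 ≤ n) (s : Fin n → Fin 3) (k1 : Fin n)
    (hk1 : s k1 ≠ s ⟨0, hn⟩) (hmin : ∀ j, j < k1 → s j = s ⟨0, hn⟩) (c : Fin 3)
    (hc0 : c ≠ s ⟨0, hn⟩) (hck : c ≠ s k1) :
    (hanoi n).neighborFinset s
      = ({s ⟨0, hn⟩}ᶜ : Finset (Fin 3)).image (fun p => Function.update s ⟨0, hn⟩ p)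
        ∪ {Function.update s k1 c} := by
  set z : Fin n := ⟨0, hn⟩ with hz
  have hzk1 : z < k1 := by
    refine lt_of_le_of_ne (by simp [hz, Fin.le_def]) ?_
    intro h; exact hk1 (by rw [← h])
  ext t
  simp only [SimpleGraph.mem_neighborFinset, Finset.mem_union, Finset.mem_image,
    Finset.mem_compl, Finset.mem_singleton]
  constructor
  · rintro ⟨k, h1, h2, h3⟩
    rcases eq_or_ne k z with hkz | hk
    · left
      refine ⟨t z, fun h => h2 (by rw [hkz]; exact h.symm), ?_⟩
      funext j
      rcases eq_or_ne j z with rfl | hj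
      · simp
      · rw [Function.update_of_ne hj]
        exact h1 j (by rw [hkz]; exact hj)
    · right
      have hzk : z < k := lt_of_le_of_ne (by simp [hz, Fin.le_def]) (Ne.symm hk)
      have hsz := h3 z hzk
      have hkk1 : k = k1 := by
        rcases lt_trichotomy k k1 with h | h | h
        · exact absurd (hmin k h) (Ne.symm hsz.1)
        · exact h
        · exfalso
          have h31 := h3 k1 h
          rcases fin3_cover (s z) (s k1) (s k) (t k) (Ne.symm hk1) hsz.1
            h31.1 with h' | h' | h'
          · exact hsz.2 h'.symm
          · exact h31.2 h'.symm
          · exact h2 h'.symm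
      rw [hkk1] at h1 h2 hsz
      have htc : t k1 = c := by
        refine fin3_unique (s z) (s k1) (t k1) c (Ne.symm hk1) ?_ (Ne.symm h2) hc0 hck
        exact fun h => hsz.2 h.symm
      funext j
      rcases eq_or_ne j k1 with rfl | hj
      · simp [htc]
      · rw [Function.update_of_ne hj]
        exact (h1 j hj).symm
  · rintro (⟨p, hp, rfl⟩ | rfl)
    · refine ⟨z, fun j hj => (Function.update_of_ne hj _ _).symm, by simp [Ne.symm hp], ?_⟩
      intro j hj
      exact absurd hj (by simp [hz, Fin.lt_def])
    · refine ⟨k1, fun j hj => (Function.update_of_ne hj _ _).symm, by simp [Ne.symm hck], ?_⟩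
      intro j hj
      rw [Function.update_self, hmin j hj]
      exact ⟨Ne.symm hk1, Ne.symm hc0⟩

lemma degree_eq {n : ℕ} (hn : 1 ≤ n) (s : Fin n → Fin 3) [Decidable (∀ j, s j = s ⟨0, hn⟩)] :
    (hanoi n).degree s = if ∀ j, s j = s ⟨0, hn⟩ then 2 else 3 := by
  have hinj : Function.Injective (fun p => Function.update s ⟨0, hn⟩ p) := by
    intro p q h
    simpa using congrFun h ⟨0, hn⟩
  have hcard2 : (({s ⟨0, hn⟩}ᶜ : Finset (Fin 3)).image
      (fun p => Function.update s ⟨0, hn⟩ p)).card = 2 := by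
    rw [Finset.card_image_of_injective _ hinj, Finset.card_compl]
    simp
  rw [SimpleGraph.degree]
  split_ifs with h
  · rw [neigh_const hn s h, hcard2]
  · push_neg at h
    have hne : (Finset.univ.filter (fun k => s k ≠ s ⟨0, hn⟩)).Nonempty := by
      obtain ⟨j, hj⟩ := h
      exact ⟨j, by simp [hj]⟩
    set k1 := (Finset.univ.filter (fun k => s k ≠ s ⟨0, hn⟩)).min' hne with hk1def
    have hk1 : s k1 ≠ s ⟨0, hn⟩ := by
      have := Finset.min'_mem _ hne
      simpa using this
    have hmin : ∀ j, j < k1 → s j = s ⟨0, hn⟩ := by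
      intro j hj
      by_contra hjne
      exact absurd hj (not_lt.2 (Finset.min'_le _ _ (by simp [hjne])))
    obtain ⟨c, hc0, hck⟩ : ∃ c : Fin 3, c ≠ s ⟨0, hn⟩ ∧ c ≠ s k1 := by
      have : ∀ x y : Fin 3, x ≠ y → ∃ c, c ≠ y ∧ c ≠ x := by decide
      exact this _ _ hk1
    rw [neigh_nonconst hn s k1 hk1 hmin c hc0 hck]
    rw [Finset.card_union_of_disjoint, hcard2, Finset.card_singleton]
    rw [Finset.disjoint_singleton_right]
    simp only [Finset.mem_image, Finset.mem_compl, Finset.mem_singleton]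
    rintro ⟨p, hp, hpe⟩
    have hzk1 : (⟨0, hn⟩ : Fin n) < k1 :=
      lt_of_le_of_ne (by simp [Fin.le_def]) (fun hh => hk1 (by rw [← hh]))
    have := congrFun hpe ⟨0, hn⟩
    rw [Function.update_self, Function.update_of_ne (ne_of_lt hzk1)] at this
    exact hp this


/-- the Hanoi graph `H_n` has `3·(3^n − 1)/2` edges. -/
theorem hanoi_edge_count (n : ℕ) (hn : 1 ≤ n) :
    ((hanoi n).edgeFinset.card : ℚ) = 3 * ((3 : ℚ) ^ n - 1) / 2 := by
  classical
  have hsum := SimpleGraph.sum_degrees_eq_twice_card_edges (hanoi n)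
  have hdeg : ∀ s : Fin n → Fin 3,
      (hanoi n).degree s = if ∀ j, s j = s ⟨0, hn⟩ then 2 else 3 :=
    fun s => degree_eq hn s
  rw [Finset.sum_congr rfl (fun s _ => hdeg s), Finset.sum_ite, Finset.sum_const,
    Finset.sum_const, smul_eq_mul, smul_eq_mul] at hsum
  have himage : Finset.univ.filter (fun s : Fin n → Fin 3 => ∀ j, s j = s ⟨0, hn⟩)
      = Finset.univ.image (fun p : Fin 3 => fun _ : Fin n => p) := by
    ext s
    simp only [Finset.mem_filter, Finset.mem_univ, true_and, Finset.mem_image]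
    constructor
    · intro h; exact ⟨s ⟨0, hn⟩, funext fun j => (h j).symm⟩
    · rintro ⟨p, rfl⟩; intro j; rfl
  have hP : (Finset.univ.filter (fun s : Fin n → Fin 3 => ∀ j, s j = s ⟨0, hn⟩)).card = 3 := by
    rw [himage, Finset.card_image_of_injective _ (fun p q h => congrFun h ⟨0, hn⟩)]
    simp
  have hsplit := Finset.card_filter_add_card_filter_not
    (s := (Finset.univ : Finset (Fin n → Fin 3)))
    (p := fun s => ∀ j, s j = s ⟨0, hn⟩)
  rw [Finset.card_univ, hP] at hsplit
  have hcardfun : Fintype.card (Fin n → Fin 3) = 3 ^ n := by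
    simp [Fintype.card_fun]
  rw [hcardfun] at hsplit
  rw [hP] at hsum
  -- hsum : 2 * 3 + 3 * cardNotP = 2 * E,  hsplit : 3 + cardNotP = 3^n
  have h3n : (1 : ℕ) ≤ 3 ^ n := Nat.one_le_pow _ _ (by norm_num)
  have hq : (3 : ℚ) * 2 + ((Finset.univ.filter
      (fun s : Fin n → Fin 3 => ¬∀ j, s j = s ⟨0, hn⟩)).card : ℚ) * 3
      = 2 * ((hanoi n).edgeFinset.card : ℚ) := by exact_mod_cast hsum
  have hq2 : (3 : ℚ) + ((Finset.univ.filter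
      (fun s : Fin n → Fin 3 => ¬∀ j, s j = s ⟨0, hn⟩)).card : ℚ) = 3 ^ n := by
    exact_mod_cast congrArg (Nat.cast : ℕ → ℚ) hsplit
  rw [eq_div_iff (by norm_num : (2:ℚ) ≠ 0)]
  linarith
end

section
/- For every n ≥ 1 and every state s of the Hanoi graph H_n: if s is a constant function (all disks on one peg) then the degree of s in H_n is 2, and otherwise the degree of s in H_n is 3. -/
lemma fin3_unique_s18 : ∀ a b c d : Fin 3, a ≠ b → c ≠ a → c ≠ b → d ≠ a → d ≠ b → c = d := by decide

lemma fin3_mem : ∀ a b c x : Fin 3, b ≠ c → b ≠ a → c ≠ a → x ≠ a → x = b ∨ x = c := by decide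

lemma fin3_exists_pair : ∀ a : Fin 3, ∃ b c : Fin 3, b ≠ c ∧ b ≠ a ∧ c ≠ a := by decide

lemma fin3_exists_third : ∀ a b : Fin 3, a ≠ b → ∃ c, c ≠ a ∧ c ≠ b := by decide

lemma hanoi_adj_update {n : ℕ} (s : Fin n → Fin 3) (k : Fin n) (c : Fin 3) (hc : s k ≠ c)
    (h : ∀ j, j < k → s j ≠ s k ∧ s j ≠ c) :
    (hanoi n).Adj s (Function.update s k c) := by
  refine ⟨k, fun j hj => (Function.update_of_ne hj c s).symm, by simpa using hc, ?_⟩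
  intro j hj
  simpa using h j hj

lemma hanoi_adj_eq {n : ℕ} {s t : Fin n → Fin 3} (k : Fin n)
    (h1 : ∀ j, j ≠ k → s j = t j) : t = Function.update s k (t k) := by
  funext j
  by_cases hj : j = k
  · subst hj; simp
  · rw [Function.update_of_ne hj]; exact (h1 j hj).symm

/-- in `H_n`, corner states have degree 2 and all other states have
degree 3. -/
theorem hanoi_degree (n : ℕ) (hn : 1 ≤ n) (s : Fin n → Fin 3) :
    ((∃ p : Fin 3, s = corner n p) → (hanoi n).degree s = 2) ∧
    ((¬ ∃ p : Fin 3, s = corner n p) → (hanoi n).degree s = 3) := by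
  set z : Fin n := ⟨0, hn⟩ with hz
  have hzlt : ∀ j : Fin n, ¬ j < z := by
    intro j hj
    exact Nat.not_lt_zero _ hj
  have hzle : ∀ k : Fin n, z ≤ k := fun k => Nat.zero_le _
  obtain ⟨c1, c2, hcc, hc1, hc2⟩ := fin3_exists_pair (s z)
  have hadj0 : ∀ c : Fin 3, c ≠ s z → (hanoi n).Adj s (Function.update s z c) := by
    intro c hc
    exact hanoi_adj_update s z c hc.symm (fun j hj => absurd hj (hzlt j))
  constructor
  · rintro ⟨p, rfl⟩
    have hsz : corner n p z = p := rfl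
    have hne : Function.update (corner n p) z c1 ≠ Function.update (corner n p) z c2 := by
      intro h
      exact hcc (by simpa using congrFun h z)
    have hset : (hanoi n).neighborFinset (corner n p) =
        {Function.update (corner n p) z c1, Function.update (corner n p) z c2} := by
      ext t
      simp only [SimpleGraph.mem_neighborFinset, Finset.mem_insert, Finset.mem_singleton]
      constructor
      · rintro ⟨k, h1, h2, h3⟩
        have hkz : k = z := by
          by_contra hk
          have : z < k := lt_of_le_of_ne (hzle k) (Ne.symm hk)
          exact (h3 z this).1 rfl
        subst hkz
        have ht : t = Function.update (corner n p) z (t z) := hanoi_adj_eq z h1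
        rcases fin3_mem p c1 c2 (t z) hcc hc1 hc2 h2.symm with h | h
        · left; rw [ht, h]
        · right; rw [ht, h]
      · rintro (rfl | rfl)
        · exact hadj0 c1 hc1
        · exact hadj0 c2 hc2
    rw [SimpleGraph.degree, hset]
    rw [Finset.card_insert_of_notMem (by simpa using hne), Finset.card_singleton]
  · intro h
    have hex : ∃ k, s k ≠ s z := by
      by_contra he
      push_neg at he
      exact h ⟨s z, funext fun j => he j⟩
    set F := Finset.univ.filter (fun k => s k ≠ s z) with hF
    have hFne : F.Nonempty := ⟨hex.choose, by simp [hF, hex.choose_spec]⟩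
    set k₀ := F.min' hFne with hk₀
    have hk₀ne : s k₀ ≠ s z := by
      have := F.min'_mem hFne
      simpa [hF] using this
    have hmin : ∀ j, j < k₀ → s j = s z := by
      intro j hj
      by_contra hsj
      exact absurd (F.min'_le j (by simp [hF, hsj])) (not_le.mpr hj)
    have hzk₀ : z < k₀ := lt_of_le_of_ne (hzle k₀) (fun he => hk₀ne (by rw [← he]))
    obtain ⟨c3, hc3a, hc3b⟩ := fin3_exists_third (s k₀) (s z) hk₀ne
    have hadj3 : (hanoi n).Adj s (Function.update s k₀ c3) := by
      refine hanoi_adj_update s k₀ c3 hc3a.symm ?_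
      intro j hj
      rw [hmin j hj]
      exact ⟨hk₀ne.symm, hc3b.symm⟩
    have hne12 : Function.update s z c1 ≠ Function.update s z c2 := by
      intro h'
      exact hcc (by simpa using congrFun h' z)
    have hne13 : Function.update s z c1 ≠ Function.update s k₀ c3 := by
      intro h'
      have := congrFun h' z
      rw [Function.update_self, Function.update_of_ne (ne_of_lt hzk₀)] at this
      exact hc1 this
    have hne23 : Function.update s z c2 ≠ Function.update s k₀ c3 := by
      intro h'
      have := congrFun h' z
      rw [Function.update_self, Function.update_of_ne (ne_of_lt hzk₀)] at this
      exact hc2 this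
    have hset : (hanoi n).neighborFinset s =
        {Function.update s z c1, Function.update s z c2, Function.update s k₀ c3} := by
      ext t
      simp only [SimpleGraph.mem_neighborFinset, Finset.mem_insert, Finset.mem_singleton]
      constructor
      · rintro ⟨k, h1, h2, h3⟩
        have ht : t = Function.update s k (t k) := hanoi_adj_eq k h1
        by_cases hkz : k = z
        · subst hkz
          rcases fin3_mem (s z) c1 c2 (t z) hcc hc1 hc2 h2.symm with h' | h'
          · left; rw [ht, h']
          · right; left; rw [ht, h']
        · have hzk : z < k := lt_of_le_of_ne (hzle k) (Ne.symm hkz)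
          have hall : ∀ j, j < k → s j = s z := by
            intro j hj
            exact fin3_unique_s18 (s k) (t k) (s j) (s z) h2 (h3 j hj).1 (h3 j hj).2
              (h3 z hzk).1 (h3 z hzk).2
          have hkF : k ∈ F := by
            simp only [hF, Finset.mem_filter, Finset.mem_univ, true_and]
            exact fun he => (h3 z hzk).1 he.symm
          have hkk₀ : k = k₀ := by
            rcases lt_trichotomy k k₀ with h' | h' | h'
            · exact absurd (F.min'_le k hkF) (not_le.mpr h')
            · exact h'
            · exact absurd (hall k₀ h') hk₀ne
          subst hkk₀
          have htk : t k₀ = c3 :=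
            fin3_unique_s18 (s k₀) (s z) (t k₀) c3 hk₀ne h2.symm (fun he => (h3 z hzk).2 he.symm)
              hc3a hc3b
          right; right; rw [ht, htk]
      · rintro (rfl | rfl | rfl)
        · exact hadj0 c1 hc1
        · exact hadj0 c2 hc2
        · exact hadj3
    rw [SimpleGraph.degree, hset]
    rw [Finset.card_insert_of_notMem (by simp [hne12, hne13]),
      Finset.card_insert_of_notMem (by simpa using hne23), Finset.card_singleton]
end

section
/- Let n ≥ 1 and let φ : (Fin n → Fin 3) → ℝ satisfy φ(C) = 0, Σ_{t adjacent to s} (φ(s) − φ(t)) = 0 for every state s of the Hanoi graph H_n with s ∉ {A, C}, and Σ_{t adjacent to A} (φ(A) − φ(t)) = 1. Then φ(A) = (5^n − 3^n)/3^n. (The effective electrical resistance between two corner nodes of the n-disk Tower of Hanoi state-transition graph with a 1-ohm resistor on every edge equals 2·R(n) where R(n) = (5^n − 3^n)/(2·3^n), as given by the Delta-to-Wye Induction theorem.) -/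
open Finset

abbrev St (n : ℕ) := Fin n → Fin 3

namespace HanoiAux

noncomputable section

def R : ℕ → ℝ
  | 0 => 0
  | n+1 => (5 * R n + 2) / 3

lemma R_succ (n : ℕ) : R (n+1) = (5 * R n + 2) / 3 := rfl

lemma R_closed (n : ℕ) : R n = ((5:ℝ)^n - 3^n) / 3^n := by
  induction n with
  | zero => simp [R]
  | succ n ih =>
    have h3 : (3:ℝ)^n ≠ 0 := by positivity
    rw [R_succ, ih]
    field_simp
    ring

def netcur (n : ℕ) (φ : St n → ℝ) (s : St n) : ℝ :=
  ∑ t : St n, if (hanoi n).Adj s t then φ s - φ t else 0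

lemma sum_neighbor_eq (n : ℕ) (φ : St n → ℝ) (s : St n) :
    ∑ t ∈ (hanoi n).neighborFinset s, (φ s - φ t) = netcur n φ s := by
  rw [SimpleGraph.neighborFinset_eq_filter, Finset.sum_filter]; rfl

lemma netcur_affine (n : ℕ) (c a b : ℝ) (f g : St n → ℝ) (s : St n) :
    netcur n (fun t => c + a * f t + b * g t) s
      = a * netcur n f s + b * netcur n g s := by
  unfold netcur
  rw [Finset.mul_sum, Finset.mul_sum, ← Finset.sum_add_distrib]
  refine Finset.sum_congr rfl fun t _ => ?_
  by_cases h : (hanoi n).Adj s t <;> simp [h] <;> ring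

lemma netcur_sub (n : ℕ) (f g : St n → ℝ) (s : St n) :
    netcur n (fun t => f t - g t) s = netcur n f s - netcur n g s := by
  unfold netcur
  rw [← Finset.sum_sub_distrib]
  refine Finset.sum_congr rfl fun t _ => ?_
  by_cases h : (hanoi n).Adj s t <;> simp [h] <;> ring

lemma adj_comp (n : ℕ) (σ : Equiv.Perm (Fin 3)) (s t : St n) :
    (hanoi n).Adj (fun i => σ (s i)) (fun i => σ (t i)) ↔ (hanoi n).Adj s t := by
  constructor
  · rintro ⟨k, h1, h2, h3⟩
    exact ⟨k, fun j hj => σ.injective (h1 j hj), fun h => h2 (congrArg σ h), fun j hj =>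
      ⟨fun h => (h3 j hj).1 (congrArg σ h), fun h => (h3 j hj).2 (congrArg σ h)⟩⟩
  · rintro ⟨k, h1, h2, h3⟩
    exact ⟨k, fun j hj => congrArg σ (h1 j hj), fun h => h2 (σ.injective h), fun j hj =>
      ⟨fun h => (h3 j hj).1 (σ.injective h), fun h => (h3 j hj).2 (σ.injective h)⟩⟩

lemma netcur_comp (n : ℕ) (σ : Equiv.Perm (Fin 3)) (φ : St n → ℝ) (s : St n) :
    netcur n (fun t => φ (fun i => σ (t i))) s = netcur n φ (fun i => σ (s i)) := by
  unfold netcur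
  refine Fintype.sum_equiv (Equiv.piCongrRight fun _ => σ) _ _ fun t => ?_
  have ht : (Equiv.piCongrRight fun _ : Fin n => σ) t = fun i => σ (t i) := rfl
  rw [ht]
  exact if_congr (adj_comp n σ s t).symm rfl rfl

lemma sum_netcur (n : ℕ) (φ : St n → ℝ) : ∑ s : St n, netcur n φ s = 0 := by
  unfold netcur
  have hanti : ∀ s t : St n, (if (hanoi n).Adj s t then φ s - φ t else 0)
      + (if (hanoi n).Adj t s then φ t - φ s else 0) = 0 := by
    intro s t
    by_cases h : (hanoi n).Adj s t
    · rw [if_pos h, if_pos h.symm]; ring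
    · rw [if_neg h, if_neg fun hc => h hc.symm]; ring
  have h2 : (∑ s : St n, ∑ t : St n, if (hanoi n).Adj s t then φ s - φ t else 0)
      + (∑ s : St n, ∑ t : St n, if (hanoi n).Adj t s then φ t - φ s else 0) = 0 := by
    rw [← Finset.sum_add_distrib]
    refine Finset.sum_eq_zero fun s _ => ?_
    rw [← Finset.sum_add_distrib]
    exact Finset.sum_eq_zero fun t _ => hanti s t
  have hcomm : (∑ s : St n, ∑ t : St n, if (hanoi n).Adj t s then φ t - φ s else 0)
      = (∑ t : St n, ∑ s : St n, if (hanoi n).Adj t s then φ t - φ s else 0) :=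
    Finset.sum_comm
  rw [hcomm] at h2
  linarith

end
end HanoiAux

namespace HanoiAux
noncomputable section
open Finset

lemma adj_snoc_iff (n : ℕ) (x y : St n) (p q : Fin 3) :
    (hanoi (n+1)).Adj (Fin.snoc x p) (Fin.snoc y q) ↔
      (p = q ∧ (hanoi n).Adj x y) ∨
      (x = y ∧ p ≠ q ∧ ∀ i : Fin n, x i ≠ p ∧ x i ≠ q) := by
  constructor
  · rintro ⟨k, h1, h2, h3⟩
    induction k using Fin.lastCases with
    | last =>
      refine Or.inr ⟨funext fun i => ?_, ?_, fun i => ?_⟩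
      · have := h1 i.castSucc (Fin.castSucc_lt_last i).ne
        rwa [Fin.snoc_castSucc, Fin.snoc_castSucc] at this
      · rwa [Fin.snoc_last, Fin.snoc_last] at h2
      · have := h3 i.castSucc (Fin.castSucc_lt_last i)
        rwa [Fin.snoc_castSucc, Fin.snoc_last, Fin.snoc_last] at this
    | cast k =>
      refine Or.inl ⟨?_, k, fun j hj => ?_, ?_, fun j hj => ?_⟩
      · have := h1 (Fin.last n) (Fin.castSucc_lt_last k).ne'
        rwa [Fin.snoc_last, Fin.snoc_last] at this
      · have := h1 j.castSucc (by simpa [Fin.castSucc_inj] using hj)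
        rwa [Fin.snoc_castSucc, Fin.snoc_castSucc] at this
      · rwa [Fin.snoc_castSucc, Fin.snoc_castSucc] at h2
      · have := h3 j.castSucc (by simpa [Fin.castSucc_lt_castSucc_iff] using hj)
        rwa [Fin.snoc_castSucc, Fin.snoc_castSucc, Fin.snoc_castSucc] at this
  · rintro (⟨rfl, k, h1, h2, h3⟩ | ⟨rfl, hpq, hcond⟩)
    · refine ⟨k.castSucc, fun j hj => ?_, ?_, fun j hj => ?_⟩
      · induction j using Fin.lastCases with
        | last => rw [Fin.snoc_last, Fin.snoc_last]
        | cast j =>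
          rw [Fin.snoc_castSucc, Fin.snoc_castSucc]
          exact h1 j (by simpa [Fin.castSucc_inj] using hj)
      · rwa [Fin.snoc_castSucc, Fin.snoc_castSucc]
      · induction j using Fin.lastCases with
        | last => exact absurd hj (Fin.castSucc_lt_last k).asymm
        | cast j =>
          rw [Fin.snoc_castSucc, Fin.snoc_castSucc, Fin.snoc_castSucc]
          exact h3 j (by simpa [Fin.castSucc_lt_castSucc_iff] using hj)
    · refine ⟨Fin.last n, fun j hj => ?_, ?_, fun j hj => ?_⟩
      · obtain ⟨j, rfl⟩ := Fin.exists_castSucc_eq.2 hj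
        rw [Fin.snoc_castSucc, Fin.snoc_castSucc]
      · rwa [Fin.snoc_last, Fin.snoc_last]
      · obtain ⟨j, rfl⟩ := Fin.exists_castSucc_eq.2 hj.ne
        rw [Fin.snoc_castSucc, Fin.snoc_last, Fin.snoc_last]
        exact hcond j

lemma netcur_snoc (n : ℕ) (φ : St (n+1) → ℝ) (x : St n) (p : Fin 3) :
    netcur (n+1) φ (Fin.snoc x p) =
      netcur n (fun y => φ (Fin.snoc y p)) x +
      ∑ q : Fin 3, if p ≠ q ∧ ∀ i : Fin n, x i ≠ p ∧ x i ≠ q then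
        φ (Fin.snoc (α := fun _ => Fin 3) x p) - φ (Fin.snoc x q) else 0 := by
  unfold netcur
  rw [← Fintype.sum_equiv (Fin.snocEquiv (fun _ => Fin 3))
      (fun tq => if (hanoi (n+1)).Adj (Fin.snoc x p) (Fin.snoc tq.2 tq.1) then
        φ (Fin.snoc (α := fun _ => Fin 3) x p) - φ (Fin.snoc tq.2 tq.1) else 0) _
      (fun tq => rfl)]
  rw [Fintype.sum_prod_type]
  have hq : ∀ q : Fin 3,
      (∑ y : St n, if (hanoi (n+1)).Adj (Fin.snoc x p) (Fin.snoc y q) then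
        φ (Fin.snoc (α := fun _ => Fin 3) x p) - φ (Fin.snoc y q) else 0)
      = (if q = p then netcur n (fun y => φ (Fin.snoc y p)) x else 0)
        + (if p ≠ q ∧ ∀ i : Fin n, x i ≠ p ∧ x i ≠ q then
            φ (Fin.snoc (α := fun _ => Fin 3) x p) - φ (Fin.snoc x q) else 0) := by
    intro q
    by_cases hqp : q = p
    · subst hqp
      rw [if_pos rfl, if_neg (by simp), add_zero]
      unfold netcur
      refine Finset.sum_congr rfl fun y _ => ?_
      refine if_congr ?_ rfl rfl
      rw [adj_snoc_iff]
      simp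
    · rw [if_neg hqp, zero_add]
      have hpq : p ≠ q := fun h => hqp h.symm
      have this : ∀ y : St n, ((hanoi (n+1)).Adj (Fin.snoc x p) (Fin.snoc y q)) ↔
          (x = y ∧ p ≠ q ∧ ∀ i : Fin n, x i ≠ p ∧ x i ≠ q) := by
        intro y
        rw [adj_snoc_iff]
        simp [hpq]
      by_cases hc : p ≠ q ∧ ∀ i : Fin n, x i ≠ p ∧ x i ≠ q
      · rw [if_pos hc]
        have hrw : ∀ y : St n, ((hanoi (n+1)).Adj (Fin.snoc x p) (Fin.snoc y q)) ↔ x = y := by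
          intro y; rw [this y]; simp [hc.1, hc.2]
        rw [Finset.sum_congr rfl (fun y _ => if_congr (hrw y) rfl rfl)]
        rw [Finset.sum_ite_eq univ x (fun y => φ (Fin.snoc (α := fun _ => Fin 3) x p) - φ (Fin.snoc y q))]
        simp
      · rw [if_neg hc]
        refine Finset.sum_eq_zero fun y _ => ?_
        rw [if_neg]
        rw [this y]
        rintro ⟨-, h2, h3⟩
        exact hc ⟨h2, h3⟩
  rw [Finset.sum_congr rfl fun q _ => hq q, Finset.sum_add_distrib]
  congr 1
  rw [Finset.sum_ite_eq' univ p (fun _ => netcur n (fun y => φ (Fin.snoc y p)) x)]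
  simp only [Finset.mem_univ, if_true]
  rfl

end
end HanoiAux

namespace HanoiAux
noncomputable section
open Finset

def sw12 : Equiv.Perm (Fin 3) := Equiv.swap 1 2
def sw02 : Equiv.Perm (Fin 3) := Equiv.swap 0 2
def cyc : Equiv.Perm (Fin 3) := sw02.trans sw12

@[simp] lemma sw12_0 : sw12 0 = 0 := by decide
@[simp] lemma sw12_1 : sw12 1 = 2 := by decide
@[simp] lemma sw12_2 : sw12 2 = 1 := by decide
@[simp] lemma sw02_0 : sw02 0 = 2 := by decide
@[simp] lemma sw02_1 : sw02 1 = 1 := by decide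
@[simp] lemma sw02_2 : sw02 2 = 0 := by decide
@[simp] lemma cyc_0 : cyc 0 = 1 := by decide
@[simp] lemma cyc_1 : cyc 1 = 2 := by decide
@[simp] lemma cyc_2 : cyc 2 = 0 := by decide

def u : (n : ℕ) → St n → ℝ
  | 0, _ => 0
  | n+1, s =>
    if s (Fin.last n) = 0 then
      (R (n+1) - R n) + (2/3) * u n (fun i => sw12 (s i.castSucc))
        + (1/3) * u n (fun i => s i.castSucc)
    else if s (Fin.last n) = 1 then
      (R (n+1) - (2/3) * R n - 1/3) + (-(1/3)) * u n (fun i => s i.castSucc)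
        + 0 * u n (fun i => s i.castSucc)
    else
      R n + (-(2/3)) * u n (fun i => cyc (s i.castSucc))
        + (-(1/3)) * u n (fun i => sw02 (s i.castSucc))

lemma u_snoc0 (n : ℕ) (x : St n) :
    u (n+1) (Fin.snoc x 0) = (R (n+1) - R n) + (2/3) * u n (fun i => sw12 (x i))
      + (1/3) * u n x := by
  simp only [u, Fin.snoc_last, Fin.snoc_castSucc]
  rfl

lemma u_snoc1 (n : ℕ) (x : St n) :
    u (n+1) (Fin.snoc x 1) = (R (n+1) - (2/3) * R n - 1/3) + (-(1/3)) * u n x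
      + 0 * u n x := by
  simp only [u, Fin.snoc_last, Fin.snoc_castSucc]
  rfl

lemma u_snoc2 (n : ℕ) (x : St n) :
    u (n+1) (Fin.snoc x 2) = R n + (-(2/3)) * u n (fun i => cyc (x i))
      + (-(1/3)) * u n (fun i => sw02 (x i)) := by
  simp only [u, Fin.snoc_last, Fin.snoc_castSucc]
  rfl

lemma comp_corner (n : ℕ) (σ : Equiv.Perm (Fin 3)) (c : Fin 3) :
    (fun i => σ (corner n c i)) = corner n (σ c) := rfl

lemma comp_eq_corner_iff (n : ℕ) (σ : Equiv.Perm (Fin 3)) (x : St n) (c : Fin 3) :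
    (fun i => σ (x i)) = corner n c ↔ x = corner n (σ.symm c) := by
  constructor
  · intro h
    funext i
    have := congrFun h i
    simp only [corner] at this ⊢
    rw [← this, Equiv.symm_apply_apply]
  · rintro rfl
    funext i
    simp [corner]

lemma snoc_eq_corner_iff (n : ℕ) (x : St n) (p c : Fin 3) :
    Fin.snoc x p = corner (n+1) c ↔ x = corner n c ∧ p = c := by
  constructor
  · intro h
    refine ⟨funext fun i => ?_, ?_⟩
    · have := congrFun h i.castSucc
      rwa [Fin.snoc_castSucc] at this
    · have := congrFun h (Fin.last n)
      rwa [Fin.snoc_last] at this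
  · rintro ⟨rfl, rfl⟩
    funext i
    induction i using Fin.lastCases with
    | last => rw [Fin.snoc_last]; rfl
    | cast i => rw [Fin.snoc_castSucc]; rfl

lemma corner_snoc (n : ℕ) (c : Fin 3) : corner (n+1) c = Fin.snoc (corner n c) c :=
  ((snoc_eq_corner_iff n (corner n c) c c).2 ⟨rfl, rfl⟩).symm

lemma corner_ne (n : ℕ) (hn : 1 ≤ n) (c d : Fin 3) (hcd : c ≠ d) :
    corner n c ≠ corner n d := fun h => hcd (congrFun h ⟨0, hn⟩)

lemma forall_ne_iff (n : ℕ) (x : St n) (a b c : Fin 3) (hab : a ≠ b) (hca : c ≠ a)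
    (hcb : c ≠ b) : (∀ i, x i ≠ a ∧ x i ≠ b) ↔ x = corner n c := by
  have key : ∀ v a b c : Fin 3, a ≠ b → c ≠ a → c ≠ b → v ≠ a → v ≠ b → v = c := by decide
  constructor
  · intro h
    funext i
    exact key (x i) a b c hab hca hcb (h i).1 (h i).2
  · rintro rfl i
    exact ⟨hca, hcb⟩

lemma u_corner (n : ℕ) :
    u n (corner n 0) = R n ∧ u n (corner n 1) = R n / 2 ∧ u n (corner n 2) = 0 := by
  induction n with
  | zero => refine ⟨?_, ?_, ?_⟩ <;> simp [u, R]
  | succ n ih =>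
    obtain ⟨h0, h1, h2⟩ := ih
    refine ⟨?_, ?_, ?_⟩
    · rw [corner_snoc, u_snoc0, comp_corner]
      norm_num [h0]
      rw [R_succ]; ring
    · rw [corner_snoc, u_snoc1]
      rw [h1, R_succ]; ring
    · rw [corner_snoc, u_snoc2, comp_corner, comp_corner]
      norm_num [h0]
      ring
end
end HanoiAux

namespace HanoiAux
noncomputable section
open Finset

@[simp] lemma sw12s0 : sw12.symm 0 = 0 := by decide
@[simp] lemma sw12s2 : sw12.symm 2 = 1 := by decide
@[simp] lemma sw02s0 : sw02.symm 0 = 2 := by decide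
@[simp] lemma sw02s2 : sw02.symm 2 = 0 := by decide
@[simp] lemma cycs0 : cyc.symm 0 = 2 := by decide
@[simp] lemma cycs2 : cyc.symm 2 = 1 := by decide

lemma u_zero (y : St 0) : u 0 y = 0 := rfl

lemma R_zero : R 0 = 0 := rfl

lemma netcur_zero (φ : St 0 → ℝ) (x : St 0) : netcur 0 φ x = 0 := by
  unfold netcur
  refine Finset.sum_eq_zero fun t _ => ?_
  rw [Subsingleton.elim t x, if_neg ((hanoi 0).loopless.irrefl x)]

lemma fin3_cases (p : Fin 3) : p = 0 ∨ p = 1 ∨ p = 2 := by revert p; decide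

lemma u_netcur : ∀ n, 1 ≤ n → ∀ s : St n, netcur n (u n) s =
    if s = corner n 0 then 1 else if s = corner n 2 then -1 else 0 := by
  intro n
  induction n with
  | zero => intro h; exact absurd h (by omega)
  | succ n ih =>
    intro _ s
    obtain ⟨x, p, rfl⟩ : ∃ x p, s = Fin.snoc x p :=
      ⟨Fin.init s, s (Fin.last n), (Fin.snoc_init_self s).symm⟩
    rw [netcur_snoc]
    obtain ⟨hu0, hu1, hu2⟩ := u_corner n
    rcases Nat.eq_zero_or_pos n with hn | hn
    · -- base case: H₁
      subst hn
      rw [netcur_zero, zero_add, Fin.sum_univ_three]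
      have hx : ∀ c, x = corner 0 c := fun c => Subsingleton.elim x _
      rcases fin3_cases p with rfl | rfl | rfl <;>
        simp [snoc_eq_corner_iff, ← hx, u_snoc0, u_snoc1, u_snoc2, u_zero,
          R_succ, R_zero, IsEmpty.forall_iff] <;> norm_num
    · -- inductive step
      have ih1 := ih hn
      have hco : ∀ (c d : Fin 3), c ≠ d → ((corner n c = corner n d) ↔ False) :=
        fun c d h => iff_false_intro (corner_ne n hn c d h)
      have h01 := hco 0 1 (by decide)
      have h02 := hco 0 2 (by decide)
      have h10 := hco 1 0 (by decide)
      have h12 := hco 1 2 (by decide)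
      have h20 := hco 2 0 (by decide)
      have h21 := hco 2 1 (by decide)
      have hC012 : (∀ i, x i ≠ 0 ∧ x i ≠ 1) ↔ x = corner n 2 :=
        forall_ne_iff n x 0 1 2 (by decide) (by decide) (by decide)
      have hC021 : (∀ i, x i ≠ 0 ∧ x i ≠ 2) ↔ x = corner n 1 :=
        forall_ne_iff n x 0 2 1 (by decide) (by decide) (by decide)
      have hC102 : (∀ i, x i ≠ 1 ∧ x i ≠ 0) ↔ x = corner n 2 :=
        forall_ne_iff n x 1 0 2 (by decide) (by decide) (by decide)
      have hC120 : (∀ i, x i ≠ 1 ∧ x i ≠ 2) ↔ x = corner n 0 :=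
        forall_ne_iff n x 1 2 0 (by decide) (by decide) (by decide)
      have hC201 : (∀ i, x i ≠ 2 ∧ x i ≠ 0) ↔ x = corner n 1 :=
        forall_ne_iff n x 2 0 1 (by decide) (by decide) (by decide)
      have hC210 : (∀ i, x i ≠ 2 ∧ x i ≠ 1) ↔ x = corner n 0 :=
        forall_ne_iff n x 2 1 0 (by decide) (by decide) (by decide)
      rcases fin3_cases p with rfl | rfl | rfl
      · -- p = 0
        have e1 : (fun y => u (n+1) (Fin.snoc y 0)) = fun y =>
            (R (n+1) - R n) + (2/3) * u n (fun i => sw12 (y i)) + (1/3) * u n y :=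
          funext fun y => u_snoc0 n y
        rw [e1, netcur_affine n (R (n+1) - R n) (2/3) (1/3)
            (fun y => u n (fun i => sw12 (y i))) (u n) x,
          netcur_comp n sw12 (u n) x, ih1, ih1, Fin.sum_univ_three]
        simp only [comp_eq_corner_iff, snoc_eq_corner_iff, sw12s0, sw12s2]
        by_cases hx0 : x = corner n 0
        · subst hx0
          simp [h01, h02, h10, h12, h20, h21, hC012, hC021, hC102, hC120, hC201, hC210, u_snoc0, u_snoc1, u_snoc2, comp_corner, hu0, hu1, hu2, R_succ]
          try linarith
        · by_cases hx1 : x = corner n 1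
          · subst hx1
            simp [hx0, h01, h02, h10, h12, h20, h21, hC012, hC021, hC102, hC120, hC201, hC210, u_snoc0, u_snoc1, u_snoc2, comp_corner, hu0, hu1, hu2, R_succ]
            try linarith
          · by_cases hx2 : x = corner n 2
            · subst hx2
              simp [hx0, hx1, h01, h02, h10, h12, h20, h21, hC012, hC021, hC102, hC120, hC201, hC210, u_snoc0, u_snoc1, u_snoc2, comp_corner, hu0, hu1, hu2, R_succ]
              try linarith
            · simp [hx0, hx1, hx2, h01, h02, h10, h12, h20, h21, hC012, hC021, hC102, hC120, hC201, hC210, u_snoc0, u_snoc1, u_snoc2, comp_corner, hu0, hu1, hu2, R_succ]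
              try linarith
      · -- p = 1
        have e1 : (fun y => u (n+1) (Fin.snoc y 1)) = fun y =>
            (R (n+1) - (2/3) * R n - 1/3) + (-(1/3)) * u n y + 0 * u n y :=
          funext fun y => u_snoc1 n y
        rw [e1, netcur_affine n (R (n+1) - (2/3) * R n - 1/3) (-(1/3)) 0 (u n) (u n) x,
          ih1, Fin.sum_univ_three]
        simp only [snoc_eq_corner_iff]
        by_cases hx0 : x = corner n 0
        · subst hx0
          simp [h01, h02, h10, h12, h20, h21, hC012, hC021, hC102, hC120, hC201, hC210, u_snoc0, u_snoc1, u_snoc2, comp_corner, hu0, hu1, hu2, R_succ]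
          try linarith
        · by_cases hx1 : x = corner n 1
          · subst hx1
            simp [hx0, h01, h02, h10, h12, h20, h21, hC012, hC021, hC102, hC120, hC201, hC210, u_snoc0, u_snoc1, u_snoc2, comp_corner, hu0, hu1, hu2, R_succ]
            try linarith
          · by_cases hx2 : x = corner n 2
            · subst hx2
              simp [hx0, hx1, h01, h02, h10, h12, h20, h21, hC012, hC021, hC102, hC120, hC201, hC210, u_snoc0, u_snoc1, u_snoc2, comp_corner, hu0, hu1, hu2, R_succ]
              try linarith
            · simp [hx0, hx1, hx2, h01, h02, h10, h12, h20, h21, hC012, hC021, hC102, hC120, hC201, hC210, u_snoc0, u_snoc1, u_snoc2, comp_corner, hu0, hu1, hu2, R_succ]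
              try linarith
      · -- p = 2
        have e1 : (fun y => u (n+1) (Fin.snoc y 2)) = fun y =>
            R n + (-(2/3)) * u n (fun i => cyc (y i)) + (-(1/3)) * u n (fun i => sw02 (y i)) :=
          funext fun y => u_snoc2 n y
        rw [e1, netcur_affine n (R n) (-(2/3)) (-(1/3))
            (fun y => u n (fun i => cyc (y i))) (fun y => u n (fun i => sw02 (y i))) x,
          netcur_comp n cyc (u n) x, netcur_comp n sw02 (u n) x, ih1, ih1, Fin.sum_univ_three]
        simp only [comp_eq_corner_iff, snoc_eq_corner_iff, cycs0, cycs2, sw02s0, sw02s2]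
        by_cases hx0 : x = corner n 0
        · subst hx0
          simp [h01, h02, h10, h12, h20, h21, hC012, hC021, hC102, hC120, hC201, hC210, u_snoc0, u_snoc1, u_snoc2, comp_corner, hu0, hu1, hu2, R_succ]
          try linarith
        · by_cases hx1 : x = corner n 1
          · subst hx1
            simp [hx0, h01, h02, h10, h12, h20, h21, hC012, hC021, hC102, hC120, hC201, hC210, u_snoc0, u_snoc1, u_snoc2, comp_corner, hu0, hu1, hu2, R_succ]
            try linarith
          · by_cases hx2 : x = corner n 2
            · subst hx2
              simp [hx0, hx1, h01, h02, h10, h12, h20, h21, hC012, hC021, hC102, hC120, hC201, hC210, u_snoc0, u_snoc1, u_snoc2, comp_corner, hu0, hu1, hu2, R_succ]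
              try linarith
            · simp [hx0, hx1, hx2, h01, h02, h10, h12, h20, h21, hC012, hC021, hC102, hC120, hC201, hC210, u_snoc0, u_snoc1, u_snoc2, comp_corner, hu0, hu1, hu2, R_succ]
              try linarith

end
end HanoiAux

namespace HanoiAux
noncomputable section
open Finset

lemma adj_snoc_of_adj (n : ℕ) (p : Fin 3) {x y : St n} (h : (hanoi n).Adj x y) :
    (hanoi (n+1)).Adj (Fin.snoc x p) (Fin.snoc y p) :=
  (adj_snoc_iff n x y p p).2 (Or.inl ⟨rfl, h⟩)

lemma reach_snoc (n : ℕ) (p : Fin 3) {x y : St n} (h : (hanoi n).Reachable x y) :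
    (hanoi (n+1)).Reachable (Fin.snoc x p) (Fin.snoc y p) := by
  obtain ⟨w⟩ := h
  induction w with
  | nil => exact SimpleGraph.Reachable.refl _
  | cons hadj _ ih => exact (SimpleGraph.Adj.reachable (adj_snoc_of_adj n p hadj)).trans ih

lemma reach_corner : ∀ n (s : St n) (p : Fin 3), (hanoi n).Reachable s (corner n p) := by
  intro n
  induction n with
  | zero => intro s p; rw [Subsingleton.elim s (corner 0 p)]
  | succ n ih =>
    intro s p
    obtain ⟨x, b, rfl⟩ : ∃ x b, s = Fin.snoc x b :=
      ⟨Fin.init s, s (Fin.last n), (Fin.snoc_init_self s).symm⟩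
    by_cases hb : b = p
    · subst hb
      rw [corner_snoc]
      exact reach_snoc n b (ih x b)
    · obtain ⟨r, hrb, hrp⟩ : ∃ r : Fin 3, r ≠ b ∧ r ≠ p := by
        revert hb; revert b p; decide
      have h1 : (hanoi (n+1)).Reachable (Fin.snoc x b) (Fin.snoc (corner n r) b) :=
        reach_snoc n b (ih x r)
      have h2 : (hanoi (n+1)).Adj (Fin.snoc (corner n r) b) (Fin.snoc (corner n r) p) :=
        (adj_snoc_iff n (corner n r) (corner n r) b p).2
          (Or.inr ⟨rfl, hb, fun i => ⟨hrb, hrp⟩⟩)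
      have h3 : (hanoi (n+1)).Reachable (Fin.snoc (corner n r) p) (corner (n+1) p) := by
        rw [corner_snoc]; exact reach_snoc n p (ih (corner n r) p)
      exact (h1.trans h2.reachable).trans h3

lemma harmonic_eq (n : ℕ) (ψ : St n → ℝ) (h : ∀ s, netcur n ψ s = 0) (a b : St n) :
    ψ a = ψ b := by
  obtain ⟨m, -, hm⟩ := Finset.exists_max_image Finset.univ ψ ⟨a, Finset.mem_univ a⟩
  have step : ∀ c d : St n, (hanoi n).Adj c d → ψ c = ψ m → ψ d = ψ m := by
    intro c d hcd hc
    have h0 := h c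
    rw [← sum_neighbor_eq] at h0
    have hnn : ∀ t ∈ (hanoi n).neighborFinset c, 0 ≤ ψ c - ψ t := by
      intro t _
      rw [hc]
      linarith [hm t (Finset.mem_univ t)]
    have hz := (Finset.sum_eq_zero_iff_of_nonneg hnn).1 h0 d
      ((SimpleGraph.mem_neighborFinset _ _ _).2 hcd)
    linarith
  have prop : ∀ (c d : St n), (hanoi n).Walk c d → ψ c = ψ m → ψ d = ψ m := by
    intro c d w
    induction w with
    | nil => exact id
    | cons huv _ ih => exact fun hc => ih (step _ _ huv hc)
  have all : ∀ c : St n, ψ c = ψ m := fun c => by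
    obtain ⟨w⟩ := (reach_corner n m 0).trans (reach_corner n c 0).symm
    exact prop m c w rfl
  rw [all a, all b]

end
end HanoiAux


open HanoiAux in
/-- the effective electrical resistance between corners `A` and `C` of the
Hanoi graph `H_n` with a 1-ohm resistor on every edge equals `(5^n − 3^n)/3^n`. -/
theorem hanoi_effective_resistance (n : ℕ) (hn : 1 ≤ n)
    (φ : (Fin n → Fin 3) → ℝ)
    (hC : φ (corner n 2) = 0)
    (hkirchhoff : ∀ s, s ≠ corner n 0 → s ≠ corner n 2 →
      ∑ t ∈ (hanoi n).neighborFinset s, (φ s - φ t) = 0)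
    (hcurrent : ∑ t ∈ (hanoi n).neighborFinset (corner n 0), (φ (corner n 0) - φ t) = 1) :
    φ (corner n 0) = ((5 : ℝ) ^ n - 3 ^ n) / 3 ^ n := by
  obtain ⟨hu0, hu1, hu2⟩ := u_corner n
  have hAC : corner n 0 ≠ corner n 2 := corner_ne n hn 0 2 (by decide)
  have hA : netcur n φ (corner n 0) = 1 := by rw [← sum_neighbor_eq]; exact hcurrent
  have hCval : netcur n φ (corner n 2) = -1 := by
    have hsum := sum_netcur n φ
    rw [← Finset.sum_sdiff (s₁ := {corner n 0, corner n 2}) (Finset.subset_univ _),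
      Finset.sum_pair hAC] at hsum
    have hrest : ∑ s ∈ Finset.univ \ {corner n 0, corner n 2}, netcur n φ s = 0 := by
      refine Finset.sum_eq_zero fun s hs => ?_
      rw [Finset.mem_sdiff, Finset.mem_insert, Finset.mem_singleton] at hs
      push_neg at hs
      rw [← sum_neighbor_eq]
      exact hkirchhoff s hs.2.1 hs.2.2
    rw [hrest, zero_add, hA] at hsum
    linarith
  have hφ : ∀ s, netcur n φ s =
      if s = corner n 0 then 1 else if s = corner n 2 then -1 else 0 := by
    intro s
    by_cases h0 : s = corner n 0
    · subst h0; rw [if_pos rfl]; exact hA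
    · by_cases h2 : s = corner n 2
      · subst h2; rw [if_neg h0, if_pos rfl]; exact hCval
      · rw [if_neg h0, if_neg h2, ← sum_neighbor_eq]
        exact hkirchhoff s h0 h2
  have hψ : ∀ s, netcur n (fun t => φ t - u n t) s = 0 := by
    intro s
    rw [netcur_sub, hφ s, u_netcur n hn s, sub_self]
  have heq := harmonic_eq n (fun t => φ t - u n t) hψ (corner n 0) (corner n 2)
  simp only [hC, hu2, hu0, sub_zero] at heq
  have := R_closed n
  linarith
end
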